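/- arXiv:1612.07680 — 11 statements merged into one kernel-verified Lean document; each statement's English description precedes it below -/
import Mathlib

section
/- For every integer l ≥ 1 and every real r ≥ 1, the number of tuples (n_1,...,n_l) of integers with each n_j ≥ 2 and n_1·n_2·…·n_l ≤ r is at most r·(log r)^{l-1}/(l-1)!. -/
open Filter Real Set

/-- `A N l r` is the number of tuples `(n_1, ..., n_l)` of natural numbers
with each `n_j ≥ N` and `n_1 ⋯ n_l ≤ r`. -/
noncomputable def A (N l : ℕ) (r : ℝ) : ℕ :=
  {x : Fin l → ℕ | (∀ j, N ≤ x j) ∧ ((∏ j, x j : ℕ) : ℝ) ≤ r}.ncard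

/-!
Splitting off the first factor gives `A N (l + 1) r ≤ ∑_{N ≤ n ≤ r} A N l (r / n)`, and
`A N 0 r ≤ 1`. By induction on `l`, the bound then reduces to
`∑_{2 ≤ n ≤ r} log (r / n) ^ m / n ≤ log r ^ (m + 1) / (m + 1)`, a discrete form of
`∫_1^r log (r / t) ^ m dt / t = log r ^ (m + 1) / (m + 1)`. It holds term by term against the
telescoping differences of `log (r / n) ^ (m + 1) / (m + 1)`, since `log (n / (n - 1)) ≥ 1 / n`
and `x ^ (m + 1) - y ^ (m + 1) ≥ (m + 1) (x - y) y ^ m` for `0 ≤ y ≤ x`.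
-/

theorem mul_sub_mul_pow_le_pow_sub_pow {R : Type*} [CommRing R] [PartialOrder R]
    [IsOrderedRing R] {x y : R} (hy : 0 ≤ y) (hyx : y ≤ x) (n : ℕ) :
    (n + 1) * (x - y) * y ^ n ≤ x ^ (n + 1) - y ^ (n + 1) := by
  have hself := geom_sum₂_self y (n + 1)
  simp only [add_tsub_cancel_right, Nat.cast_add, Nat.cast_one] at hself
  calc (n + 1) * (x - y) * y ^ n
      = (∑ i ∈ Finset.range (n + 1), y ^ i * y ^ (n - i)) * (x - y) := by rw [hself]; ring
    _ ≤ (∑ i ∈ Finset.range (n + 1), x ^ i * y ^ (n - i)) * (x - y) := by gcongr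
    _ = x ^ (n + 1) - y ^ (n + 1) := by simpa using geom_sum₂_mul x y (n + 1)

theorem mul_pow_log_div_add_one_le_sub (m : ℕ) {r s : ℝ} (hs : 0 < s) (hsr : s + 1 ≤ r) :
    (m + 1) * (log (r / (s + 1)) ^ m / (s + 1)) ≤
      log (r / s) ^ (m + 1) - log (r / (s + 1)) ^ (m + 1) := by
  have hr : 0 < r := by linarith
  have hb : 0 ≤ log (r / (s + 1)) := log_nonneg ((one_le_div (by positivity)).2 hsr)
  have hgap : (s + 1)⁻¹ ≤ log (r / s) - log (r / (s + 1)) := by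
    rw [← log_div (by positivity) (by positivity), div_div_div_cancel_left' _ _ hr.ne']
    convert one_sub_inv_le_log_of_pos (x := (s + 1) / s) (by positivity) using 1
    field_simp
    ring
  calc (m + 1) * (log (r / (s + 1)) ^ m / (s + 1))
      = (m + 1) * (s + 1)⁻¹ * log (r / (s + 1)) ^ m := by ring
    _ ≤ (m + 1) * (log (r / s) - log (r / (s + 1))) * log (r / (s + 1)) ^ m := by gcongr
    _ ≤ log (r / s) ^ (m + 1) - log (r / (s + 1)) ^ (m + 1) :=
        mul_sub_mul_pow_le_pow_sub_pow hb (by linarith [inv_pos.2 (by linarith : 0 < s + 1)]) m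

theorem sum_Icc_pow_log_div_div_le (m : ℕ) {r : ℝ} (hr : 1 ≤ r) :
    ∑ n ∈ Finset.Icc 2 ⌊r⌋₊, log (r / n) ^ m / n ≤ log r ^ (m + 1) / (m + 1) := by
  set M := ⌊r⌋₊
  have hM : 1 ≤ M := Nat.one_le_floor_iff _ |>.2 hr
  have hMr : (M : ℝ) ≤ r := Nat.floor_le (by linarith)
  let G : ℕ → ℝ := fun k ↦ log (r / k) ^ (m + 1) / (m + 1)
  have hterm : ∀ k ∈ Finset.Ico 1 M,
      log (r / (k + 1 : ℕ)) ^ m / (k + 1 : ℕ) ≤ G k - G (k + 1) := by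
    intro k hk
    obtain ⟨hk1, hkM⟩ := Finset.mem_Ico.1 hk
    have hkr : (k : ℝ) + 1 ≤ r := le_trans (by exact_mod_cast hkM) hMr
    have := mul_pow_log_div_add_one_le_sub m (by exact_mod_cast hk1 : (0 : ℝ) < k) hkr
    simp only [G]
    push_cast
    rw [← sub_div, le_div_iff₀ (by positivity)]
    linarith
  have hlogM : 0 ≤ log (r / M) := log_nonneg ((one_le_div (by positivity)).2 hMr)
  calc ∑ n ∈ Finset.Icc 2 M, log (r / n) ^ m / n
      = ∑ k ∈ Finset.Ico 1 M, log (r / (k + 1 : ℕ)) ^ m / (k + 1 : ℕ) := by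
        rw [Finset.sum_Ico_add' (fun n : ℕ ↦ log (r / n) ^ m / n), Finset.Ico_add_one_right_eq_Icc]
    _ ≤ ∑ k ∈ Finset.Ico 1 M, (G k - G (k + 1)) := Finset.sum_le_sum hterm
    _ = G 1 - G M := by simpa only [neg_sub_neg] using Finset.sum_Ico_sub (fun k ↦ -G k) hM
    _ ≤ G 1 := sub_le_self _ (by positivity)
    _ = log r ^ (m + 1) / (m + 1) := by simp only [G, Nat.cast_one, div_one]

def boundedProductTuples (N l : ℕ) (r : ℝ) : Set (Fin l → ℕ) :=
  {x | (∀ j, N ≤ x j) ∧ ((∏ j, x j : ℕ) : ℝ) ≤ r}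

theorem A_eq_ncard (N l : ℕ) (r : ℝ) : A N l r = (boundedProductTuples N l r).ncard := rfl

section BoundedProductTuples

variable {N l : ℕ} {r : ℝ}

theorem A_zero_le_one : A N 0 r ≤ 1 :=
  Set.ncard_le_one_of_subsingleton _

theorem le_floor_of_mem_boundedProductTuples (hN : 1 ≤ N) {x : Fin l → ℕ}
    (hx : x ∈ boundedProductTuples N l r) (j : Fin l) : x j ≤ ⌊r⌋₊ :=
  have hj : x j ≤ ∏ i, x i :=
    Finset.single_le_prod' (fun i _ ↦ hN.trans (hx.1 i)) (Finset.mem_univ j)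
  Nat.le_floor <| le_trans (by exact_mod_cast hj) hx.2

theorem finite_boundedProductTuples (hN : 1 ≤ N) : (boundedProductTuples N l r).Finite :=
  (Set.finite_Iic fun _ ↦ ⌊r⌋₊).subset fun _ hx j ↦ le_floor_of_mem_boundedProductTuples hN hx j

theorem boundedProductTuples_succ_subset (hN : 1 ≤ N) :
    boundedProductTuples N (l + 1) r ⊆
      ⋃ n ∈ Finset.Icc N ⌊r⌋₊, Matrix.vecCons n '' boundedProductTuples N l (r / n) := by
  intro x hx
  have hx0 : (0 : ℝ) < x 0 := by exact_mod_cast hN.trans (hx.1 0)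
  simp only [Set.mem_iUnion, Finset.mem_Icc]
  refine ⟨x 0, ⟨hx.1 0, le_floor_of_mem_boundedProductTuples hN hx 0⟩, Matrix.vecTail x,
    ⟨fun j ↦ hx.1 j.succ, ?_⟩, Matrix.cons_head_tail x⟩
  rw [le_div_iff₀ hx0]
  have := hx.2
  rw [Fin.prod_univ_succ] at this
  push_cast at this
  simpa [Matrix.vecTail, mul_comm] using this

theorem A_succ_le (hN : 1 ≤ N) :
    A N (l + 1) r ≤ ∑ n ∈ Finset.Icc N ⌊r⌋₊, A N l (r / n) := by
  simp only [A_eq_ncard]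
  calc (boundedProductTuples N (l + 1) r).ncard
      ≤ (⋃ n ∈ Finset.Icc N ⌊r⌋₊, Matrix.vecCons n '' boundedProductTuples N l (r / n)).ncard :=
        Set.ncard_le_ncard (boundedProductTuples_succ_subset hN) <|
          (Finset.finite_toSet _).biUnion fun _ _ ↦ (finite_boundedProductTuples hN).image _
    _ ≤ ∑ n ∈ Finset.Icc N ⌊r⌋₊, (Matrix.vecCons n '' boundedProductTuples N l (r / n)).ncard :=
        Finset.set_ncard_biUnion_le _ _
    _ = ∑ n ∈ Finset.Icc N ⌊r⌋₊, (boundedProductTuples N l (r / n)).ncard :=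
        Finset.sum_congr rfl fun n _ ↦
          Set.ncard_image_of_injective _ fun _ _ h ↦ (Matrix.vecCons_inj.1 h).2

end BoundedProductTuples

open Nat in
theorem A_two_succ_le (m : ℕ) {r : ℝ} (hr : 1 ≤ r) :
    (A 2 (m + 1) r : ℝ) ≤ r * log r ^ m / m ! := by
  induction m generalizing r with
  | zero =>
    calc (A 2 1 r : ℝ) ≤ ∑ n ∈ Finset.Icc 2 ⌊r⌋₊, (A 2 0 (r / n) : ℝ) := by
          exact_mod_cast A_succ_le one_le_two
      _ ≤ ∑ _n ∈ Finset.Icc 2 ⌊r⌋₊, (1 : ℝ) :=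
          Finset.sum_le_sum fun n _ ↦ by exact_mod_cast A_zero_le_one
      _ ≤ ⌊r⌋₊ := by
          rw [Finset.sum_const, Nat.card_Icc, nsmul_one]
          exact_mod_cast (by omega : ⌊r⌋₊ + 1 - 2 ≤ ⌊r⌋₊)
      _ ≤ r * log r ^ 0 / 0 ! := by simpa using Nat.floor_le (by linarith)
  | succ m ih =>
    have hquot : ∀ n ∈ Finset.Icc 2 ⌊r⌋₊, 1 ≤ r / n := fun n hn ↦ by
      obtain ⟨h2n, hnr⟩ := Finset.mem_Icc.1 hn
      rw [one_le_div (by positivity)]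
      exact (Nat.cast_le.2 hnr).trans (Nat.floor_le (by linarith))
    calc (A 2 (m + 1 + 1) r : ℝ) ≤ ∑ n ∈ Finset.Icc 2 ⌊r⌋₊, (A 2 (m + 1) (r / n) : ℝ) := by
          exact_mod_cast A_succ_le one_le_two
      _ ≤ ∑ n ∈ Finset.Icc 2 ⌊r⌋₊, r / n * log (r / n) ^ m / m ! :=
          Finset.sum_le_sum fun n hn ↦ ih (hquot n hn)
      _ = r / m ! * ∑ n ∈ Finset.Icc 2 ⌊r⌋₊, log (r / n) ^ m / n := by
          rw [Finset.mul_sum]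
          exact Finset.sum_congr rfl fun n _ ↦ by ring
      _ ≤ r / m ! * (log r ^ (m + 1) / (m + 1)) := by
          gcongr
          exact sum_Icc_pow_log_div_div_le m hr
      _ = r * log r ^ (m + 1) / (m + 1)! := by
          rw [Nat.factorial_succ]
          push_cast
          field_simp

theorem stmt_0 (l : ℕ) (hl : 1 ≤ l) (r : ℝ) (hr : 1 ≤ r) :
    (A 2 l r : ℝ) ≤ r * (Real.log r) ^ (l - 1) / (Nat.factorial (l - 1)) := by
  obtain ⟨m, rfl⟩ := Nat.exists_eq_add_of_le' hl
  exact A_two_succ_le m hr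
end

section
/- For every N ∈ ℕ and l ∈ ℕ, the ratio A_N(r,l) / (r (log r)^{l-1}) tends to 1/(l-1)! as r → ∞. -/
open Filter Real Set

/-! Splitting off the first coordinate gives `A N (l + 1) x = ∑_{N ≤ n ≤ x} A N l (x / n)`.
By induction on `k`, `A N (k + 1) x = x (log x)^k / k! + O(errorTerm k x)` uniformly for `x ≥ 1`:
the main terms sum to `x / k! * ∑_{N ≤ n ≤ x} (log x - log n)^k / n`, which is within `N (log x)^k`
of `∫₁ˣ (log x - log t)^k / t dt = (log x)^(k+1) / (k+1)` because the integrand is antitone, and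
the error terms sum to `O(x (1 + log x)^k)` by the harmonic bound `∑ 1/n ≤ 1 + log x`. -/

def tuples (N l : ℕ) (r : ℝ) : Set (Fin l → ℕ) :=
  {x | (∀ j, N ≤ x j) ∧ ((∏ j, x j : ℕ) : ℝ) ≤ r}

variable {N l n : ℕ} {r x : ℝ}

theorem natCast_mem_Icc_of_mem_Icc_floor (hN : 1 ≤ N) (hn : n ∈ Finset.Icc N ⌊r⌋₊) :
    (n : ℝ) ∈ Icc 1 r := by
  obtain ⟨hNn, hnr⟩ := Finset.mem_Icc.1 hn
  exact ⟨by exact_mod_cast hN.trans hNn, (Nat.le_floor_iff' (by omega)).1 hnr⟩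

theorem one_le_div_of_mem_Icc_floor (hN : 1 ≤ N) (hn : n ∈ Finset.Icc N ⌊r⌋₊) : 1 ≤ r / n :=
  have h := natCast_mem_Icc_of_mem_Icc_floor hN hn
  (one_le_div (one_pos.trans_le h.1)).2 h.2

theorem A_eq_ncard_tuples : A N l r = (tuples N l r).ncard := rfl

theorem tuples_finite (hN : 1 ≤ N) : (tuples N l r).Finite := by
  refine (Set.Finite.pi' fun _ => Set.finite_Iic ⌊r⌋₊).subset fun x hx j => Nat.le_floor ?_
  refine le_trans (Nat.cast_le.2 ?_) hx.2
  exact Finset.single_le_prod' (fun i _ => hN.trans (hx.1 i)) (Finset.mem_univ j)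

theorem one_le_of_mem_tuples (hN : 1 ≤ N) {x : Fin l → ℕ} (hx : x ∈ tuples N l r) : 1 ≤ r :=
  le_trans (Nat.one_le_cast.2 (Finset.one_le_prod' fun j _ => hN.trans (hx.1 j))) hx.2

theorem mem_tuples_succ {x : Fin (l + 1) → ℕ} (hN : 1 ≤ N) :
    x ∈ tuples N (l + 1) r ↔ N ≤ x 0 ∧ Fin.tail x ∈ tuples N l (r / x 0) := by
  simp only [tuples, Fin.forall_fin_succ, Fin.prod_univ_succ, Nat.cast_mul, and_assoc]
  refine and_congr_right fun h0 => and_congr_right fun _ => ?_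
  rw [le_div_iff₀ (by exact_mod_cast hN.trans h0), mul_comm]
  rfl

theorem tuples_zero (hr : 1 ≤ r) : tuples N 0 r = Set.univ :=
  Set.eq_univ_of_forall fun x => ⟨finZeroElim, by simpa using hr⟩

theorem tuples_succ (hN : 1 ≤ N) :
    tuples N (l + 1) r = ⋃ n ∈ Set.Icc N ⌊r⌋₊, Fin.cons n '' tuples N l (r / n) := by
  ext x
  simp only [Set.mem_iUnion, Set.mem_image, Set.mem_Icc, exists_prop]
  constructor
  · intro hx
    obtain ⟨h0, htail⟩ := (mem_tuples_succ hN).1 hx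
    have hx0 : (0 : ℝ) < x 0 := by exact_mod_cast hN.trans h0
    have hle : (x 0 : ℝ) ≤ r := by
      simpa [one_le_div hx0] using one_le_of_mem_tuples hN htail
    exact ⟨x 0, ⟨h0, Nat.le_floor hle⟩, Fin.tail x, htail, Fin.cons_self_tail x⟩
  · rintro ⟨n, ⟨hn, -⟩, y, hy, rfl⟩
    exact (mem_tuples_succ hN).2 ⟨by simpa using hn, by simpa using hy⟩

theorem A_zero (hr : 1 ≤ r) : A N 0 r = 1 := by
  rw [A_eq_ncard_tuples, tuples_zero hr, Set.ncard_univ, Nat.card_unique]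

theorem A_succ (hN : 1 ≤ N) : A N (l + 1) r = ∑ n ∈ Finset.Icc N ⌊r⌋₊, A N l (r / n) := by
  rw [A_eq_ncard_tuples, tuples_succ hN, (Set.finite_Icc _ _).ncard_biUnion, ← Finset.coe_Icc,
    finsum_mem_coe_finset]
  · refine Finset.sum_congr rfl fun n _ => ?_
    exact Set.ncard_image_of_injective _ (Fin.cons_right_injective (α := fun _ => ℕ) n)
  · exact fun n _ => (tuples_finite hN).image _
  · intro m _ n _ hmn
    refine Set.disjoint_left.2 ?_
    rintro _ ⟨y, -, rfl⟩ ⟨z, -, h⟩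
    exact hmn (by simpa using congrFun h 0 : n = m).symm

theorem A_one (hN : 1 ≤ N) : A N 1 r = ⌊r⌋₊ + 1 - N := by
  rw [A_succ hN, ← Nat.card_Icc, Finset.card_eq_sum_ones]
  exact Finset.sum_congr rfl fun n hn => A_zero (one_le_div_of_mem_Icc_floor hN hn)

open intervalIntegral in
theorem AntitoneOn.integral_le_sub_mul {f : ℝ → ℝ} {a b : ℝ} (hab : a ≤ b)
    (hf : AntitoneOn f (Icc a b)) : ∫ t in a..b, f t ≤ (b - a) * f a := by
  have hint : IntervalIntegrable f MeasureTheory.volume a b :=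
    (uIcc_of_le hab ▸ hf).intervalIntegrable
  calc ∫ t in a..b, f t ≤ ∫ _ in a..b, f a :=
        integral_mono_on hab hint intervalIntegrable_const
          fun t ht => hf ⟨le_rfl, hab⟩ ht ht.1
    _ = (b - a) * f a := by rw [integral_const, smul_eq_mul]

theorem AntitoneOn.abs_sum_Icc_floor_sub_integral_le {f : ℝ → ℝ} {N : ℕ} {r : ℝ} (hN : 1 ≤ N)
    (hr : 1 ≤ r) (hf : AntitoneOn f (Icc 1 r)) (hf0 : ∀ t ∈ Icc 1 r, 0 ≤ f t) :
    |∑ n ∈ Finset.Icc N ⌊r⌋₊, f n - ∫ t in (1 : ℝ)..r, f t| ≤ N * f 1 := by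
  set M := ⌊r⌋₊
  have hN1 : (1 : ℝ) ≤ N := by exact_mod_cast hN
  have hrM : r < M + 1 := Nat.lt_floor_add_one r
  have hf1 : 0 ≤ f 1 := hf0 1 ⟨le_rfl, hr⟩
  have hint : ∀ a b, 1 ≤ a → a ≤ b → b ≤ r → IntervalIntegrable f MeasureTheory.volume a b :=
    fun a b ha hab hb => (uIcc_of_le hab ▸ hf.mono (Icc_subset_Icc ha hb)).intervalIntegrable
  have hupper : ∀ a b, 1 ≤ a → a ≤ b → b ≤ r → ∫ t in a..b, f t ≤ (b - a) * f 1 :=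
    fun a b ha hab hb => ((hf.mono (Icc_subset_Icc ha hb)).integral_le_sub_mul hab).trans
      (mul_le_mul_of_nonneg_left (hf ⟨le_rfl, hr⟩ ⟨ha, hab.trans hb⟩ ha) (by linarith))
  have hlower : ∀ a b, 1 ≤ a → a ≤ b → b ≤ r → 0 ≤ ∫ t in a..b, f t := fun a b ha hab hb =>
    intervalIntegral.integral_nonneg hab fun t ht => hf0 t ⟨ha.trans ht.1, ht.2.trans hb⟩
  rcases lt_or_ge M N with hMN | hNM
  · rw [Finset.Icc_eq_empty_of_lt hMN, Finset.sum_empty, zero_sub, abs_neg,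
      abs_of_nonneg (hlower 1 r le_rfl hr le_rfl)]
    have : r - 1 ≤ N := by linarith [show (M : ℝ) + 1 ≤ N by exact_mod_cast hMN]
    exact (hupper 1 r le_rfl hr le_rfl).trans (mul_le_mul_of_nonneg_right (by linarith) hf1)
  have hNM' : (N : ℝ) ≤ M := by exact_mod_cast hNM
  have hMr : (M : ℝ) ≤ r := Nat.floor_le (by linarith)
  have hfNM : AntitoneOn f (Icc (N : ℝ) M) := hf.mono (Icc_subset_Icc hN1 hMr)
  have hsplit : ∫ t in (1 : ℝ)..r, f t
      = (∫ t in (1 : ℝ)..N, f t) + (∫ t in (N : ℝ)..M, f t) + ∫ t in (M : ℝ)..r, f t := by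
    rw [intervalIntegral.integral_add_adjacent_intervals (hint 1 N le_rfl hN1 (hNM'.trans hMr))
        (hint N M hN1 hNM' hMr),
      intervalIntegral.integral_add_adjacent_intervals (hint 1 M le_rfl (hN1.trans hNM') hMr)
        (hint M r (hN1.trans hNM') hMr le_rfl)]
  have hsum_ge : ∫ t in (N : ℝ)..M, f t ≤ ∑ n ∈ Finset.Icc N M, f n :=
    (hfNM.integral_le_sum_Ico hNM).trans <| Finset.sum_le_sum_of_subset_of_nonneg
      Finset.Ico_subset_Icc_self fun n hn _ => by
        obtain ⟨h1, h2⟩ := Finset.mem_Icc.1 hn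
        exact hf0 n ⟨hN1.trans (by exact_mod_cast h1), (Nat.cast_le.2 h2).trans hMr⟩
  have hsum_le : ∑ n ∈ Finset.Icc N M, f n ≤ f 1 + ∫ t in (N : ℝ)..M, f t := by
    rw [← Finset.sum_Ioc_add_eq_sum_Icc hNM, ← Finset.Ico_add_one_add_one_eq_Ioc, add_comm]
    refine add_le_add (hf ⟨le_rfl, hr⟩ ⟨hN1, hNM'.trans hMr⟩ hN1) ?_
    simpa [← Finset.sum_Ico_add'] using hfNM.sum_le_integral_Ico hNM
  have h1N := hupper 1 N le_rfl hN1 (hNM'.trans hMr)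
  have hMr' := hupper M r (hN1.trans hNM') hMr le_rfl
  have h1N0 := hlower 1 N le_rfl hN1 (hNM'.trans hMr)
  have hMr0 := hlower M r (hN1.trans hNM') hMr le_rfl
  rw [abs_le]
  constructor <;> nlinarith

theorem log_sub_log_nonneg {r t : ℝ} (ht : 0 < t) (htr : t ≤ r) : 0 ≤ log r - log t :=
  sub_nonneg.2 (log_le_log ht htr)

theorem antitoneOn_log_sub_pow_div (k : ℕ) (r : ℝ) :
    AntitoneOn (fun t => (log r - log t) ^ k / t) (Icc 1 r) := by
  intro s hs t ht hst
  have hs0 : 0 < s := one_pos.trans_le hs.1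
  have ht0 : 0 < t := one_pos.trans_le ht.1
  have hlog : log r - log t ≤ log r - log s := sub_le_sub_left (log_le_log hs0 hst) _
  exact div_le_div₀ (pow_nonneg (log_sub_log_nonneg hs0 hs.2) k)
    (pow_le_pow_left₀ (log_sub_log_nonneg ht0 ht.2) hlog k) hs0 hst

theorem integral_log_sub_pow_div (k : ℕ) (hr : 1 ≤ r) :
    ∫ t in (1 : ℝ)..r, (log r - log t) ^ k / t = log r ^ (k + 1) / (k + 1) := by
  have hderiv : ∀ t ∈ uIcc 1 r, HasDerivAt (fun t => -((log r - log t) ^ (k + 1) / (k + 1)))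
      ((log r - log t) ^ k / t) t := by
    intro t ht
    rw [uIcc_of_le hr] at ht
    have ht0 : t ≠ 0 := (one_pos.trans_le ht.1).ne'
    refine ((((hasDerivAt_log ht0).const_sub (log r)).fun_pow (k + 1)).div_const
      ((k : ℝ) + 1)).fun_neg.congr_deriv ?_
    field_simp
    push_cast
    ring
  rw [intervalIntegral.integral_eq_sub_of_hasDerivAt hderiv
    ((uIcc_of_le hr ▸ antitoneOn_log_sub_pow_div k r).intervalIntegrable)]
  simp

theorem abs_sum_log_sub_pow_div_sub_le (hN : 1 ≤ N) (hr : 1 ≤ r) (k : ℕ) :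
    |∑ n ∈ Finset.Icc N ⌊r⌋₊, (log r - log n) ^ k / n - log r ^ (k + 1) / (k + 1)|
      ≤ N * log r ^ k := by
  have h := (antitoneOn_log_sub_pow_div k r).abs_sum_Icc_floor_sub_integral_le hN hr
    fun t ht => div_nonneg (pow_nonneg (log_sub_log_nonneg (one_pos.trans_le ht.1) ht.2) k)
      (zero_le_one.trans ht.1)
  simpa [integral_log_sub_pow_div k hr] using h

theorem sum_Icc_inv_le_one_add_log (hN : 1 ≤ N) (hr : 1 ≤ r) :
    ∑ n ∈ Finset.Icc N ⌊r⌋₊, (n : ℝ)⁻¹ ≤ 1 + log r := by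
  calc ∑ n ∈ Finset.Icc N ⌊r⌋₊, (n : ℝ)⁻¹ ≤ ∑ n ∈ Finset.Icc 1 ⌊r⌋₊, (n : ℝ)⁻¹ :=
        Finset.sum_le_sum_of_subset_of_nonneg (Finset.Icc_subset_Icc_left hN)
          fun _ _ _ => by positivity
    _ = harmonic ⌊r⌋₊ := by simp [harmonic_eq_sum_Icc]
    _ ≤ 1 + log r := harmonic_floor_le_one_add_log r hr

noncomputable def errorTerm : ℕ → ℝ → ℝ
  | 0, _ => 1
  | k + 1, x => x * (1 + log x) ^ k

theorem sum_errorTerm_div_le (hN : 1 ≤ N) (hr : 1 ≤ r) (k : ℕ) :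
    ∑ n ∈ Finset.Icc N ⌊r⌋₊, errorTerm k (r / n) ≤ errorTerm (k + 1) r := by
  cases k with
  | zero =>
    simp only [errorTerm, Finset.sum_const, nsmul_eq_mul, mul_one, pow_zero, Nat.card_Icc]
    exact (Nat.cast_le.2 (by omega)).trans (Nat.floor_le (zero_le_one.trans hr))
  | succ k =>
    have hlog : 0 ≤ log r := log_nonneg hr
    have hterm : ∀ n ∈ Finset.Icc N ⌊r⌋₊,
        errorTerm (k + 1) (r / n) ≤ r * (1 + log r) ^ k * (n : ℝ)⁻¹ := by
      intro n hn
      have hn1 : (1 : ℝ) ≤ n := (natCast_mem_Icc_of_mem_Icc_floor hN hn).1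
      have hlog_div : 0 ≤ log (r / n) := log_nonneg (one_le_div_of_mem_Icc_floor hN hn)
      have hlog_le : log (r / n) ≤ log r :=
        log_le_log (by positivity) (div_le_self (by positivity) hn1)
      calc r / n * (1 + log (r / n)) ^ k ≤ r / n * (1 + log r) ^ k := by gcongr
        _ = r * (1 + log r) ^ k * (n : ℝ)⁻¹ := by ring
    calc ∑ n ∈ Finset.Icc N ⌊r⌋₊, errorTerm (k + 1) (r / n)
        ≤ ∑ n ∈ Finset.Icc N ⌊r⌋₊, r * (1 + log r) ^ k * (n : ℝ)⁻¹ := Finset.sum_le_sum hterm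
      _ = r * (1 + log r) ^ k * ∑ n ∈ Finset.Icc N ⌊r⌋₊, (n : ℝ)⁻¹ := by rw [Finset.mul_sum]
      _ ≤ r * (1 + log r) ^ k * (1 + log r) :=
          mul_le_mul_of_nonneg_left (sum_Icc_inv_le_one_add_log hN hr) (by positivity)
      _ = errorTerm (k + 2) r := by simp only [errorTerm]; ring

noncomputable def mainTerm (k : ℕ) (x : ℝ) : ℝ := x * log x ^ k / k.factorial

theorem abs_sum_mainTerm_div_sub_le (hN : 1 ≤ N) (hx : 1 ≤ x) (k : ℕ) :
    |∑ n ∈ Finset.Icc N ⌊x⌋₊, mainTerm k (x / n) - mainTerm (k + 1) x|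
      ≤ N * errorTerm (k + 1) x := by
  have hx0 : 0 < x := one_pos.trans_le hx
  have hterm : ∀ n ∈ Finset.Icc N ⌊x⌋₊,
      mainTerm k (x / n) = x / k.factorial * ((log x - log n) ^ k / n) := fun n hn => by
    have hn0 : (n : ℝ) ≠ 0 := (one_pos.trans_le (natCast_mem_Icc_of_mem_Icc_floor hN hn).1).ne'
    rw [mainTerm, log_div hx0.ne' hn0]
    ring
  have hmain : mainTerm (k + 1) x = x / k.factorial * (log x ^ (k + 1) / (k + 1)) := by
    rw [mainTerm, Nat.factorial_succ]
    push_cast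
    field_simp
  rw [Finset.sum_congr rfl hterm, ← Finset.mul_sum, hmain, ← mul_sub, abs_mul,
    abs_of_pos (by positivity)]
  calc x / k.factorial
        * |∑ n ∈ Finset.Icc N ⌊x⌋₊, (log x - log n) ^ k / n - log x ^ (k + 1) / (k + 1)|
      ≤ x * (N * log x ^ k) :=
        mul_le_mul (div_le_self hx0.le (by exact_mod_cast k.factorial_pos))
          (abs_sum_log_sub_pow_div_sub_le hN hx k) (abs_nonneg _) hx0.le
    _ ≤ N * (x * (1 + log x) ^ k) := by
        have hlog : 0 ≤ log x := log_nonneg hx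
        rw [mul_left_comm]
        gcongr
        linarith

theorem exists_abs_A_sub_mainTerm_le (hN : 1 ≤ N) (k : ℕ) : ∃ C, 0 ≤ C ∧ ∀ x : ℝ, 1 ≤ x →
    |(A N (k + 1) x : ℝ) - mainTerm k x| ≤ C * errorTerm k x := by
  induction k with
  | zero =>
    refine ⟨N, N.cast_nonneg, fun x hx => ?_⟩
    have hfloor : (⌊x⌋₊ : ℝ) ≤ x := Nat.floor_le (zero_le_one.trans hx)
    have hfloor' : x < ⌊x⌋₊ + 1 := Nat.lt_floor_add_one x
    simp only [A_one hN, mainTerm, errorTerm, pow_zero, mul_one, Nat.factorial_zero,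
      Nat.cast_one, div_one]
    rcases le_or_gt N (⌊x⌋₊ + 1) with h | h
    · rw [Nat.cast_sub h, abs_le]
      push_cast
      constructor <;> linarith [show (1 : ℝ) ≤ N by exact_mod_cast hN]
    · rw [Nat.sub_eq_zero_of_le h.le, abs_le]
      have : (⌊x⌋₊ : ℝ) + 1 < N := by exact_mod_cast h
      constructor <;> push_cast <;> linarith
  | succ k ih =>
    obtain ⟨C, hC, hbound⟩ := ih
    refine ⟨C + N, by positivity, fun x hx => ?_⟩
    have hdecomp : (A N (k + 2) x : ℝ) - mainTerm (k + 1) x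
        = ∑ n ∈ Finset.Icc N ⌊x⌋₊, ((A N (k + 1) (x / n) : ℝ) - mainTerm k (x / n))
          + (∑ n ∈ Finset.Icc N ⌊x⌋₊, mainTerm k (x / n) - mainTerm (k + 1) x) := by
      rw [A_succ hN, Nat.cast_sum, Finset.sum_sub_distrib]
      ring
    calc |(A N (k + 2) x : ℝ) - mainTerm (k + 1) x|
        ≤ ∑ n ∈ Finset.Icc N ⌊x⌋₊, C * errorTerm k (x / n) + N * errorTerm (k + 1) x := by
          rw [hdecomp]
          refine (abs_add_le _ _).trans (add_le_add ?_ (abs_sum_mainTerm_div_sub_le hN hx k))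
          refine (Finset.abs_sum_le_sum_abs _ _).trans (Finset.sum_le_sum fun n hn => ?_)
          exact hbound _ (one_le_div_of_mem_Icc_floor hN hn)
      _ ≤ C * errorTerm (k + 1) x + N * errorTerm (k + 1) x := by
          rw [← Finset.mul_sum]
          gcongr
          exact sum_errorTerm_div_le hN hx k
      _ = (C + N) * errorTerm (k + 1) x := by ring

theorem tendsto_errorTerm_div (k : ℕ) :
    Tendsto (fun x => errorTerm k x / (x * log x ^ k)) atTop (nhds 0) := by
  cases k with
  | zero => simpa [errorTerm] using tendsto_inv_atTop_zero
  | succ k =>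
    have hratio : Tendsto (fun u : ℝ => (u⁻¹ + 1) ^ k * u⁻¹) atTop (nhds 0) := by
      simpa using
        ((tendsto_inv_atTop_zero (𝕜 := ℝ) |>.add_const 1).pow k).mul tendsto_inv_atTop_zero
    refine (hratio.comp tendsto_log_atTop).congr' ?_
    filter_upwards [eventually_gt_atTop 1] with x hx
    have hL : 0 < log x := log_pos hx
    simp only [Function.comp, errorTerm]
    rw [show (log x)⁻¹ + 1 = (1 + log x) / log x by field_simp, div_pow]
    field_simp
    ring

theorem stmt_3 (N l : ℕ) (hN : 1 ≤ N) (hl : 1 ≤ l) :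
    Filter.Tendsto (fun r : ℝ => (A N l r : ℝ) / (r * (Real.log r) ^ (l - 1)))
      Filter.atTop (nhds (1 / (Nat.factorial (l - 1)))) := by
  obtain ⟨k, rfl⟩ : ∃ k, l = k + 1 := ⟨l - 1, by omega⟩
  obtain ⟨C, -, hC⟩ := exists_abs_A_sub_mainTerm_le hN k
  rw [Nat.add_sub_cancel, ← tendsto_sub_nhds_zero_iff]
  refine squeeze_zero_norm' ?_ (by simpa using (tendsto_errorTerm_div k).const_mul C)
  filter_upwards [eventually_gt_atTop 1] with r hr
  have hlog : 0 < log r := log_pos hr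
  have hden : 0 < r * log r ^ k := by positivity
  have hdiff : (A N (k + 1) r : ℝ) / (r * log r ^ k) - 1 / k.factorial
      = ((A N (k + 1) r : ℝ) - mainTerm k r) / (r * log r ^ k) := by
    rw [mainTerm]
    field_simp
  rw [Real.norm_eq_abs, hdiff, abs_div, abs_of_pos hden, mul_div_assoc']
  exact div_le_div_of_nonneg_right (hC r hr.le) hden.le
end

section
/- The identity A_1(r,l) = 1_{r ≥ 1} + Σ_{m=1}^{l} binom(l,m) · A_2(r,m) holds for all l ∈ ℕ and r ∈ ℝ, obtained by stratifying tuples in ℕ^l by the number m of components not equal to 1. -/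
open Filter Real Set

lemma setA_finite (N l : ℕ) (hN : 1 ≤ N) (r : ℝ) :
    {x : Fin l → ℕ | (∀ j, N ≤ x j) ∧ ((∏ j, x j : ℕ) : ℝ) ≤ r}.Finite := by
  apply Set.Finite.subset (Set.Finite.pi (fun i : Fin l => Set.finite_Iic (⌊r⌋₊)))
  rintro x ⟨h1, h2⟩
  intro i _
  simp only [Set.mem_Iic]
  have hx : x i ≤ ∏ j, x j :=
    Finset.single_le_prod' (fun j _ => le_trans hN (h1 j)) (Finset.mem_univ i)
  exact Nat.le_floor (le_trans (by exact_mod_cast hx) h2)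

lemma A_zero_two (r : ℝ) : A 2 0 r = if 1 ≤ r then 1 else 0 := by
  unfold A
  split_ifs with h
  · have : {x : Fin 0 → ℕ | (∀ j, 2 ≤ x j) ∧ ((∏ j, x j : ℕ) : ℝ) ≤ r} = Set.univ := by
      ext x
      simp only [Set.mem_setOf_eq, Set.mem_univ, iff_true]
      exact ⟨fun j => j.elim0, by simpa using h⟩
    rw [this, Set.ncard_univ]
    simp [Nat.card_eq_fintype_card]
  · have : {x : Fin 0 → ℕ | (∀ j, 2 ≤ x j) ∧ ((∏ j, x j : ℕ) : ℝ) ≤ r} = ∅ := by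
      ext x
      simp only [Set.mem_setOf_eq, Set.mem_empty_iff_false, iff_false, not_and]
      intro _
      simpa using h
    rw [this, Set.ncard_empty]

open Classical in
lemma fiber_card (l : ℕ) (r : ℝ) (S : Finset (Fin l)) :
    ((setA_finite 1 l le_rfl r).toFinset.filter
      (fun x => Finset.filter (fun j => 2 ≤ x j) Finset.univ = S)).card = A 2 S.card r := by
  classical
  rw [A, Set.ncard_eq_toFinset_card _ (setA_finite 2 S.card one_le_two r)]
  set e := S.orderIsoOfFin rfl with he
  apply Finset.card_bij (fun x _ => fun i => x (e i))
  · intro x hx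
    simp only [Finset.mem_filter, Set.Finite.mem_toFinset, Set.mem_setOf_eq] at hx ⊢
    have hS : ∀ j, j ∈ S ↔ 2 ≤ x j := by
      intro j; rw [← hx.2]; simp
    have hprod : ∏ i : Fin S.card, x (e i) = ∏ j, x j := by
      calc ∏ i : Fin S.card, x (e i)
          = ∏ j : {j // j ∈ S}, x ↑j := Equiv.prod_comp e.toEquiv (fun j => x ↑j)
        _ = ∏ j ∈ S, x j := Finset.prod_coe_sort S x
        _ = ∏ j, x j := Finset.prod_subset (Finset.subset_univ S)
            (fun j _ hj => by
              have h2 := (hS j).not.mp hj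
              have h1 := hx.1.1 j
              omega)
    refine ⟨fun i => (hS _).1 (e i).2, ?_⟩
    rw [hprod]
    exact hx.1.2
  · intro x1 h1 x2 h2 heq
    simp only [Finset.mem_filter, Set.Finite.mem_toFinset, Set.mem_setOf_eq] at h1 h2
    have hS1 : ∀ j, j ∈ S ↔ 2 ≤ x1 j := by intro j; rw [← h1.2]; simp
    have hS2 : ∀ j, j ∈ S ↔ 2 ≤ x2 j := by intro j; rw [← h2.2]; simp
    funext j
    by_cases hj : j ∈ S
    · have hcoe : (e (e.symm ⟨j, hj⟩) : Fin l) = j := by simp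
      simpa [hcoe] using congrFun heq (e.symm ⟨j, hj⟩)
    · have ha := (hS1 j).not.mp hj
      have hb := (hS2 j).not.mp hj
      have := h1.1.1 j
      have := h2.1.1 j
      omega
  · intro y hy
    simp only [Set.Finite.mem_toFinset, Set.mem_setOf_eq] at hy
    refine ⟨fun j => if h : j ∈ S then y (e.symm ⟨j, h⟩) else 1, ?_, ?_⟩
    · simp only [Finset.mem_filter, Set.Finite.mem_toFinset, Set.mem_setOf_eq]
      have hval : ∀ j (h : j ∈ S),
          (fun j => if h : j ∈ S then y (e.symm ⟨j, h⟩) else 1) j = y (e.symm ⟨j, h⟩) := by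
        intro j h; simp [h]
      have h2S : ∀ j, (2:ℕ) ≤ (if h : j ∈ S then y (e.symm ⟨j, h⟩) else 1) ↔ j ∈ S := by
        intro j
        by_cases h : j ∈ S
        · simp [h, hy.1 _]
        · simp [h]
      have hprod : (∏ j, if h : j ∈ S then y (e.symm ⟨j, h⟩) else 1)
          = ∏ i, y i := by
        calc (∏ j, if h : j ∈ S then y (e.symm ⟨j, h⟩) else 1)
            = ∏ j ∈ S, (if h : j ∈ S then y (e.symm ⟨j, h⟩) else 1) :=
              (Finset.prod_subset (Finset.subset_univ S)
                (fun j _ hj => by simp [hj])).symm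
          _ = ∏ j : {j // j ∈ S}, (if h : (j : Fin l) ∈ S then y (e.symm ⟨j, h⟩) else 1) :=
              (Finset.prod_coe_sort S _).symm
          _ = ∏ i : Fin S.card,
              (if h : ((e i : Fin l)) ∈ S then y (e.symm ⟨e i, h⟩) else 1) :=
              (Equiv.prod_comp e.toEquiv _).symm
          _ = ∏ i, y i := by
              apply Finset.prod_congr rfl
              intro i _
              rw [dif_pos (e i).2]
              congr 1
              simp
      refine ⟨⟨fun j => ?_, ?_⟩, ?_⟩
      · by_cases h : j ∈ S
        · simp only [dif_pos h]; exact le_trans one_le_two (hy.1 _)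
        · simp [h]
      · rw [hprod]; exact hy.2
      · ext j; simp only [Finset.mem_filter, Finset.mem_univ, true_and]
        exact h2S j
    · funext i
      beta_reduce
      rw [dif_pos (e i).2]
      congr 1
      simp

theorem stmt_5 (l : ℕ) (hl : 1 ≤ l) (r : ℝ) :
    A 1 l r = (if 1 ≤ r then 1 else 0)
      + ∑ m ∈ Finset.Icc 1 l, Nat.choose l m * A 2 m r := by
  classical
  have hr : Finset.range (l + 1) = insert 0 (Finset.Icc 1 l) := by
    ext m; simp only [Finset.mem_range, Finset.mem_insert, Finset.mem_Icc]; omega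
  rw [A, Set.ncard_eq_toFinset_card _ (setA_finite 1 l le_rfl r)]
  rw [Finset.card_eq_sum_card_fiberwise
    (f := fun x : Fin l → ℕ => Finset.filter (fun j => 2 ≤ x j) Finset.univ)
    (t := Finset.univ) (fun x _ => Finset.mem_univ _)]
  have h1 : ∑ S : Finset (Fin l),
      ((setA_finite 1 l le_rfl r).toFinset.filter
        (fun x => Finset.filter (fun j => 2 ≤ x j) Finset.univ = S)).card
      = ∑ S : Finset (Fin l), A 2 S.card r :=
    Finset.sum_congr rfl (fun S _ => fiber_card l r S)
  rw [h1, ← Finset.powerset_univ, Finset.sum_powerset]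
  have h2 : ∀ m, ∑ S ∈ Finset.powersetCard m (Finset.univ : Finset (Fin l)),
      A 2 S.card r = l.choose m * A 2 m r := by
    intro m
    have := Finset.sum_powersetCard m (Finset.univ : Finset (Fin l)) (fun k => A 2 k r)
    simpa [Finset.card_univ, smul_eq_mul] using this
  have h3 : ∑ m ∈ Finset.range ((Finset.univ : Finset (Fin l)).card + 1),
      ∑ S ∈ Finset.powersetCard m (Finset.univ : Finset (Fin l)), A 2 S.card r
      = ∑ m ∈ Finset.range (l + 1), l.choose m * A 2 m r := by
    rw [Finset.card_univ, Fintype.card_fin]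
    exact Finset.sum_congr rfl (fun m _ => h2 m)
  rw [h3, hr, Finset.sum_insert (by simp), Nat.choose_zero_right, one_mul, A_zero_two]
end

section
/- Let σ be a nonincreasing zero sequence with 1 = σ(1) > σ(2) > 0 and suppose σ(n) ≤ C n^{-s} for some s, C > 0 and all n ≥ 2. Let τ be the nonincreasing rearrangement of the d-th tensor power of σ. Then for any δ ∈ (0,1] and all n ∈ ℕ: τ(n) ≤ ( exp(C^{(1+δ)/s}/δ) / n )^{α(d,δ)} where α(d,δ) = log(σ(2)^{-1}) / log( σ(2)^{-(1+δ)/s} · d ). -/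
/-! With `q = (1 + δ) / s + log d / log σ(2)⁻¹ = 1 / α`, Markov's inequality bounds the number
of `x` with `t ≤ ∏ σ(x_j)` by `t^(-q) ∑_x ∏ σ(x_j)^q = t^(-q) (∑_k σ(k)^q)^d`. Splitting the
exponent, `σ(k)^q ≤ (C k^(-s))^((1+δ)/s) σ(2)^(log d / log σ(2)⁻¹) = C^((1+δ)/s) k^(-(1+δ)) / d`
for `k ≥ 2`, so by the integral test the inner sum is at most `1 + C^((1+δ)/s) / (δ d)`, whose
`d`-th power is at most `exp (C^((1+δ)/s) / δ)`. As `τ` is nonincreasing, at least `n` indices `k`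
have `τ(n) ≤ τ(k)`, hence `n τ(n)^q ≤ exp (C^((1+δ)/s) / δ)`. -/

open Filter Real Set

lemma sum_Ioc_one_rpow_neg_le {δ : ℝ} (hδ : 0 < δ) (N : ℕ) :
    ∑ m ∈ Finset.Ioc 1 N, (m : ℝ) ^ (-(1 + δ)) ≤ 1 / δ := by
  have hanti : AntitoneOn (fun x : ℝ => x ^ (-(1 + δ))) (Icc ((1 : ℕ) : ℝ) N) :=
    (antitoneOn_rpow_Ioi_of_exponent_nonpos (by linarith)).mono
      fun x hx => lt_of_lt_of_le one_pos (by simpa using hx.1)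
  have hint : MeasureTheory.IntegrableOn (fun x : ℝ => x ^ (-(1 + δ))) (Ioi ((1 : ℕ) : ℝ)) := by
    simpa using integrableOn_Ioi_rpow_of_lt (by linarith : -(1 + δ) < -1) one_pos
  calc ∑ m ∈ Finset.Ioc 1 N, (m : ℝ) ^ (-(1 + δ))
      = ∑ i ∈ Finset.Ico 1 N, ((i + 1 : ℕ) : ℝ) ^ (-(1 + δ)) := by
        rw [Finset.sum_Ico_add' (fun m : ℕ => (m : ℝ) ^ (-(1 + δ))), ← Order.succ_eq_add_one,
          ← Order.succ_eq_add_one, Finset.Ico_succ_succ_eq_Ioc]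
    _ ≤ ∫ x in Ioi ((1 : ℕ) : ℝ), x ^ (-(1 + δ)) :=
        hanti.sum_Ico_le_integral hint fun t ht =>
          rpow_nonneg (zero_le_one.trans (le_of_lt (by simpa using ht))) _
    _ = 1 / δ := by
        rw [Nat.cast_one, integral_Ioi_rpow_of_lt (by linarith) one_pos]
        simp

lemma one_add_div_pow_le_exp {a : ℝ} (ha : 0 ≤ a) (n : ℕ) : (1 + a / n) ^ n ≤ exp a := by
  simpa [sub_eq_add_neg, neg_div] using
    one_sub_div_pow_le_exp_neg (n := n) (t := -a) (by linarith [n.cast_nonneg (α := ℝ)])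

lemma rpow_add_le_mul_rpow {a b c p r : ℝ} (ha : 0 ≤ a) (hab : a ≤ b) (hac : a ≤ c)
    (hp : 0 ≤ p) (hr : 0 ≤ r) : a ^ (p + r) ≤ b ^ p * c ^ r := by
  rw [rpow_add_of_nonneg ha hp hr]
  exact mul_le_mul (rpow_le_rpow ha hab hp) (rpow_le_rpow ha hac hr) (by positivity)
    (rpow_nonneg (ha.trans hab) p)

lemma rpow_log_div_log_inv {a x : ℝ} (ha : 0 < a) (ha1 : a ≠ 1) (hx : 0 < x) :
    a ^ (log x / log a⁻¹) = x⁻¹ := by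
  have : log a ≠ 0 := log_ne_zero_of_pos_of_ne_one ha ha1
  rw [rpow_def_of_pos ha, log_inv, show log a * (log x / -log a) = -log x by field_simp,
    exp_neg, exp_log hx]

lemma ncard_superlevel_mul_rpow_le {ι : Type*} {d : ℕ} {σ : ι → ℝ} (hσ : ∀ i, 0 ≤ σ i)
    {B : Finset ι} {t q : ℝ} (ht : 0 < t) (hq : 0 ≤ q)
    (hB : {x : Fin d → ι | t ≤ ∏ j, σ (x j)} ⊆ ↑(Fintype.piFinset fun _ : Fin d => B)) :
    ({x : Fin d → ι | t ≤ ∏ j, σ (x j)}.ncard : ℝ) * t ^ q ≤ (∑ y ∈ B, σ y ^ q) ^ d := by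
  have hfin := (Fintype.piFinset fun _ => B).finite_toSet.subset hB
  rw [ncard_eq_toFinset_card _ hfin]
  calc (hfin.toFinset.card : ℝ) * t ^ q = ∑ _x ∈ hfin.toFinset, t ^ q := by
        rw [Finset.sum_const, nsmul_eq_mul]
    _ ≤ ∑ x ∈ hfin.toFinset, ∏ j, σ (x j) ^ q := Finset.sum_le_sum fun x hx =>
        (rpow_le_rpow ht.le (hfin.mem_toFinset.1 hx) hq).trans_eq
          (finsetProd_rpow _ _ (fun j _ => hσ _) q).symm
    _ ≤ ∑ x ∈ Fintype.piFinset fun _ => B, ∏ j, σ (x j) ^ q :=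
        Finset.sum_le_sum_of_subset_of_nonneg (fun x hx => hB (hfin.mem_toFinset.1 hx))
          fun x _ _ => Finset.prod_nonneg fun j _ => rpow_nonneg (hσ _) q
    _ = (∑ y ∈ B, σ y ^ q) ^ d := by
        rw [Finset.sum_prod_piFinset B fun _ y => σ y ^ q, Finset.prod_const, Finset.card_univ,
          Fintype.card_fin]

lemma exists_superlevel_subset_piFinset_Icc {d : ℕ} {σ : ℕ+ → ℝ} (hσ0 : ∀ k, 0 ≤ σ k)
    (hσ1 : ∀ k, σ k ≤ 1) (hlim : Tendsto σ atTop (nhds 0)) {t : ℝ} (ht : 0 < t) :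
    ∃ N : ℕ+, {x : Fin d → ℕ+ | t ≤ ∏ j, σ (x j)} ⊆
      ↑(Fintype.piFinset fun _ : Fin d => Finset.Icc 1 N) := by
  obtain ⟨N, hN⟩ := eventually_atTop.1 (hlim.eventually_lt_const ht)
  refine ⟨N, fun x hx => Fintype.mem_piFinset.2 fun j => Finset.mem_Icc.2 ⟨one_le, ?_⟩⟩
  have hxj : t ≤ σ (x j) := hx.trans <|
    (Finset.prod_le_prod_of_subset_of_le_one (Finset.subset_univ {j}) (fun _ _ => hσ0 _)
      fun _ _ _ => hσ1 _).trans_eq (Finset.prod_singleton _ _)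
  exact (lt_of_not_ge fun h => (hN _ h).not_ge hxj).le

lemma le_ncard_setOf_apply_le_of_antitone {τ : ℕ+ → ℝ} (hτ : Antitone τ) (n : ℕ+)
    (hfin : {k | τ n ≤ τ k}.Finite) : (n : ℕ) ≤ {k | τ n ≤ τ k}.ncard := by
  calc (n : ℕ) = (Finset.Icc 1 n : Set ℕ+).ncard := by
        rw [ncard_coe_finset, PNat.card_Icc, PNat.one_coe, add_tsub_cancel_right]
    _ ≤ {k | τ n ≤ τ k}.ncard :=
        ncard_le_ncard (fun k hk => hτ (Finset.mem_Icc.1 hk).2) hfin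

lemma apply_rpow_le_of_decay {σ : ℕ+ → ℝ} (hσa : Antitone σ) (hσ0 : ∀ k, 0 ≤ σ k)
    (hσ2pos : 0 < σ 2) (hσ2lt : σ 2 < 1) {C s δ : ℝ} (hC : 0 < C) (hs : 0 < s) (hδ : 0 < δ)
    (hdecay : ∀ n : ℕ+, 2 ≤ n → σ n ≤ C * ((n : ℕ) : ℝ) ^ (-s)) {d : ℕ} (hd : 1 ≤ d)
    {y : ℕ+} (hy : 2 ≤ y) :
    σ y ^ ((1 + δ) / s + log d / log (σ 2)⁻¹) ≤
      C ^ ((1 + δ) / s) / d * ((y : ℕ) : ℝ) ^ (-(1 + δ)) := by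
  have hy0 : (0 : ℝ) < (y : ℕ) := by exact_mod_cast y.pos
  have hd0 : (0 : ℝ) < d := by exact_mod_cast hd
  have hL : 0 ≤ log d / log (σ 2)⁻¹ :=
    div_nonneg (log_nonneg (by exact_mod_cast hd))
      (log_nonneg (one_le_inv_iff₀.2 ⟨hσ2pos, hσ2lt.le⟩))
  calc σ y ^ ((1 + δ) / s + log d / log (σ 2)⁻¹)
      ≤ (C * ((y : ℕ) : ℝ) ^ (-s)) ^ ((1 + δ) / s) * σ 2 ^ (log d / log (σ 2)⁻¹) :=
        rpow_add_le_mul_rpow (hσ0 y) (hdecay y hy) (hσa hy) (by positivity) hL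
    _ = C ^ ((1 + δ) / s) / d * ((y : ℕ) : ℝ) ^ (-(1 + δ)) := by
        rw [rpow_log_div_log_inv hσ2pos hσ2lt.ne hd0, mul_rpow hC.le (rpow_nonneg hy0.le _),
          ← rpow_mul hy0.le, show -s * ((1 + δ) / s) = -(1 + δ) by field_simp]
        ring

lemma sum_Icc_rpow_le_one_add {σ : ℕ+ → ℝ} (hσa : Antitone σ) (hσ0 : ∀ k, 0 ≤ σ k)
    (hσ1 : σ 1 = 1) (hσ2pos : 0 < σ 2) (hσ2lt : σ 2 < 1) {C s δ : ℝ} (hC : 0 < C) (hs : 0 < s)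
    (hδ : 0 < δ) (hdecay : ∀ n : ℕ+, 2 ≤ n → σ n ≤ C * ((n : ℕ) : ℝ) ^ (-s)) {d : ℕ}
    (hd : 1 ≤ d) (N : ℕ+) :
    ∑ y ∈ Finset.Icc 1 N, σ y ^ ((1 + δ) / s + log d / log (σ 2)⁻¹) ≤
      1 + C ^ ((1 + δ) / s) / δ / d := by
  rw [← Finset.Ioc_insert_left one_le, Finset.sum_insert Finset.left_notMem_Ioc, hσ1, one_rpow]
  gcongr
  calc ∑ y ∈ Finset.Ioc 1 N, σ y ^ ((1 + δ) / s + log d / log (σ 2)⁻¹)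
      ≤ ∑ y ∈ Finset.Ioc 1 N, C ^ ((1 + δ) / s) / d * ((y : ℕ) : ℝ) ^ (-(1 + δ)) :=
        Finset.sum_le_sum fun y hy => apply_rpow_le_of_decay hσa hσ0 hσ2pos hσ2lt hC hs hδ hdecay hd
          (Order.add_one_le_of_lt (Finset.mem_Ioc.1 hy).1)
    _ = C ^ ((1 + δ) / s) / d * ∑ m ∈ Finset.Ioc 1 (N : ℕ), (m : ℝ) ^ (-(1 + δ)) := by
        rw [← Finset.mul_sum, ← PNat.one_coe, ← PNat.map_subtype_embedding_Ioc]
        exact congrArg _ (Finset.sum_map (Finset.Ioc 1 N) (Function.Embedding.subtype _)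
          fun m : ℕ => (m : ℝ) ^ (-(1 + δ))).symm
    _ ≤ C ^ ((1 + δ) / s) / d * (1 / δ) := by
        gcongr
        exact sum_Ioc_one_rpow_neg_le hδ _
    _ = C ^ ((1 + δ) / s) / δ / d := by ring

lemma finite_superlevel {d : ℕ} {σ : ℕ+ → ℝ} (hσ0 : ∀ k, 0 ≤ σ k) (hσ1 : ∀ k, σ k ≤ 1)
    (hlim : Tendsto σ atTop (nhds 0)) {t : ℝ} (ht : 0 < t) :
    {x : Fin d → ℕ+ | t ≤ ∏ j, σ (x j)}.Finite :=
  let ⟨_, hN⟩ := exists_superlevel_subset_piFinset_Icc hσ0 hσ1 hlim ht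
  (Finset.finite_toSet _).subset hN

lemma ncard_superlevel_mul_rpow_le_exp {σ : ℕ+ → ℝ} (hσa : Antitone σ)
    (hlim : Tendsto σ atTop (nhds 0)) (hσ1 : σ 1 = 1) (hσ2pos : 0 < σ 2) (hσ2lt : σ 2 < 1)
    {C s δ : ℝ} (hC : 0 < C) (hs : 0 < s) (hδ : 0 < δ)
    (hdecay : ∀ n : ℕ+, 2 ≤ n → σ n ≤ C * ((n : ℕ) : ℝ) ^ (-s)) {d : ℕ} (hd : 1 ≤ d)
    {t : ℝ} (ht : 0 < t) :
    ({x : Fin d → ℕ+ | t ≤ ∏ j, σ (x j)}.ncard : ℝ) *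
      t ^ ((1 + δ) / s + log d / log (σ 2)⁻¹) ≤ exp (C ^ ((1 + δ) / s) / δ) := by
  have hσ0 : ∀ k, 0 ≤ σ k := hσa.le_of_tendsto hlim
  have hq : 0 ≤ (1 + δ) / s + log d / log (σ 2)⁻¹ :=
    add_nonneg (by positivity) (div_nonneg (log_nonneg (by exact_mod_cast hd))
      (log_nonneg (one_le_inv_iff₀.2 ⟨hσ2pos, hσ2lt.le⟩)))
  obtain ⟨N, hN⟩ := exists_superlevel_subset_piFinset_Icc hσ0 (fun k => hσ1 ▸ hσa one_le) hlim ht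
  calc _ ≤ (∑ y ∈ Finset.Icc 1 N, σ y ^ ((1 + δ) / s + log d / log (σ 2)⁻¹)) ^ d :=
        ncard_superlevel_mul_rpow_le hσ0 ht hq hN
    _ ≤ (1 + C ^ ((1 + δ) / s) / δ / d) ^ d :=
        pow_le_pow_left₀ (Finset.sum_nonneg fun y _ => rpow_nonneg (hσ0 y) _)
          (sum_Icc_rpow_le_one_add hσa hσ0 hσ1 hσ2pos hσ2lt hC hs hδ hdecay hd N) d
    _ ≤ exp (C ^ ((1 + δ) / s) / δ) := one_add_div_pow_le_exp (by positivity) d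

theorem stmt_9_general (d : ℕ) (hd : 1 ≤ d) (σ τ : ℕ+ → ℝ)
    (hσa : Antitone σ) (hσ0 : Filter.Tendsto σ Filter.atTop (nhds 0))
    (hσ1 : σ 1 = 1) (hσ2pos : 0 < σ 2) (hσ2lt : σ 2 < 1)
    (hτa : Antitone τ)
    -- τ is the nonincreasing rearrangement of the d-th tensor power of σ
    (hre : ∀ t : ℝ, 0 < t →
      {n : ℕ+ | t ≤ τ n}.ncard = {x : Fin d → ℕ+ | t ≤ ∏ j, σ (x j)}.ncard)
    (C s : ℝ) (hC : 0 < C) (hs : 0 < s)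
    (hdecay : ∀ n : ℕ+, 2 ≤ n → σ n ≤ C * ((n : ℕ) : ℝ) ^ (-s))
    (δ : ℝ) (hδ0 : 0 < δ) (n : ℕ+) :
    τ n ≤ (Real.exp (C ^ ((1 + δ) / s) / δ) / ((n : ℕ) : ℝ)) ^
      (Real.log (σ 2)⁻¹ / Real.log ((σ 2) ^ (-(1 + δ) / s) * (d : ℝ))) := by
  have hlogb : 0 < log (σ 2)⁻¹ := log_pos (one_lt_inv_iff₀.2 ⟨hσ2pos, hσ2lt⟩)
  have hq : 0 < (1 + δ) / s + log d / log (σ 2)⁻¹ :=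
    add_pos_of_pos_of_nonneg (by positivity)
      (div_nonneg (log_nonneg (by exact_mod_cast hd)) hlogb.le)
  have hα : log (σ 2)⁻¹ / log (σ 2 ^ (-(1 + δ) / s) * d) =
      ((1 + δ) / s + log d / log (σ 2)⁻¹)⁻¹ := by
    have hlog : log (σ 2 ^ (-(1 + δ) / s) * d) =
        ((1 + δ) / s + log d / log (σ 2)⁻¹) * log (σ 2)⁻¹ := by
      rw [log_mul (rpow_pos_of_pos hσ2pos _).ne' (by positivity), log_rpow hσ2pos, add_mul,
        div_mul_cancel₀ _ hlogb.ne', log_inv]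
      ring
    rw [hlog, div_mul_cancel_right₀ hlogb.ne']
  rcases le_or_gt (τ n) 0 with hτ | hτ
  · exact hτ.trans (rpow_nonneg (by positivity) _)
  -- `ncard` vanishes on infinite sets, so finiteness has to come from a positive count.
  have hfin : {k | τ n ≤ τ k}.Finite := by
    have ht : 0 < min (τ n) 1 := lt_min hτ one_pos
    have hpos : 0 < {x : Fin d → ℕ+ | min (τ n) 1 ≤ ∏ j, σ (x j)}.ncard :=
      (ncard_pos (finite_superlevel (hσa.le_of_tendsto hσ0) (fun k => hσ1 ▸ hσa one_le) hσ0
        ht)).2 ⟨fun _ => 1, by simp [hσ1]⟩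
    have hpos' : 0 < {k | min (τ n) 1 ≤ τ k}.ncard := by rwa [hre _ ht]
    exact (finite_of_ncard_pos hpos').subset fun k (hk : τ n ≤ τ k) =>
      show min (τ n) 1 ≤ τ k from (min_le_left _ _).trans hk
  have hcount : ((n : ℕ) : ℝ) * τ n ^ ((1 + δ) / s + log d / log (σ 2)⁻¹) ≤
      exp (C ^ ((1 + δ) / s) / δ) := by
    calc _ ≤ ({k | τ n ≤ τ k}.ncard : ℝ) * τ n ^ ((1 + δ) / s + log d / log (σ 2)⁻¹) := by
          gcongr
          exact_mod_cast le_ncard_setOf_apply_le_of_antitone hτa n hfin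
      _ = _ := by rw [hre _ hτ]
      _ ≤ _ := ncard_superlevel_mul_rpow_le_exp hσa hσ0 hσ1 hσ2pos hσ2lt hC hs hδ0 hdecay hd hτ
  rw [hα, le_rpow_inv_iff_of_pos hτ.le (by positivity) hq, le_div_iff₀ (by positivity)]
  linarith

theorem stmt_9 (d : ℕ) (hd : 1 ≤ d) (σ τ : ℕ+ → ℝ)
    (hσa : Antitone σ) (hσ0 : Filter.Tendsto σ Filter.atTop (nhds 0))
    (hσ1 : σ 1 = 1) (hσ2pos : 0 < σ 2) (hσ2lt : σ 2 < 1)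
    (hτa : Antitone τ)
    -- τ is the nonincreasing rearrangement of the d-th tensor power of σ
    (hre : ∀ t : ℝ, 0 < t →
      {n : ℕ+ | t ≤ τ n}.ncard = {x : Fin d → ℕ+ | t ≤ ∏ j, σ (x j)}.ncard)
    (C s : ℝ) (hC : 0 < C) (hs : 0 < s)
    (hdecay : ∀ n : ℕ+, 2 ≤ n → σ n ≤ C * ((n : ℕ) : ℝ) ^ (-s))
    (δ : ℝ) (hδ0 : 0 < δ) (hδ1 : δ ≤ 1) (n : ℕ+) :
    τ n ≤ (Real.exp (C ^ ((1 + δ) / s) / δ) / ((n : ℕ) : ℝ)) ^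
      (Real.log (σ 2)⁻¹ / Real.log ((σ 2) ^ (-(1 + δ) / s) * (d : ℝ))) :=
  stmt_9_general d hd σ τ hσa hσ0 hσ1 hσ2pos hσ2lt hτa hre C s hC hs hdecay δ hδ0 n
end

section
/- Let σ be a nonincreasing zero sequence with 1 = σ(1) > σ(2) > 0, let v = #{n ≥ 2 : σ(n) = σ(2)}, and let τ be the nonincreasing rearrangement of the d-th tensor power of σ. Then for any n ∈ {2, ..., (1+v)^d}: τ(n) ≥ σ(2) · (1/n)^{β(d,n)} where β(d,n) = log(σ(2)^{-1}) / log( 1 + v·d / log_{1+v} n ). -/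
/-!
Put `L = log_{1+v} n` and `k = ⌈log n / log (1 + v d / L)⌉`. Every `x` whose coordinates equal `1`
except for at most `k` of them lying on the plateau `{2, …, v + 1}` has `∏ σ (x j) ≥ σ(2)^k`.
There are `∑_{i ≤ k} C(d, i) v^i ≥ (1 + v d / k)^k ≥ n` such `x`, hence `τ(n) ≥ σ(2)^k`, and
`σ(2)^(k - 1) ≥ σ(2)^(log n / log (1 + v d / L)) = n^(-β)`.
-/

open Filter Real Set

theorem Nat.choose_mul_pow_le_choose_mul_pow {k d : ℕ} (hkd : k ≤ d) (i : ℕ) :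
    k.choose i * d ^ i ≤ d.choose i * k ^ i := by
  have hdesc : k.descFactorial i * d ^ i ≤ d.descFactorial i * k ^ i := by
    rw [descFactorial_eq_prod_range, descFactorial_eq_prod_range, Finset.pow_eq_prod_const,
      Finset.pow_eq_prod_const, ← Finset.prod_mul_distrib, ← Finset.prod_mul_distrib]
    refine Finset.prod_le_prod' fun j _ => ?_
    have : j * k ≤ j * d := Nat.mul_le_mul_left j hkd
    rw [Nat.sub_mul, Nat.sub_mul, Nat.mul_comm d k]
    omega
  rw [descFactorial_eq_factorial_mul_choose, descFactorial_eq_factorial_mul_choose,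
    mul_assoc, mul_assoc] at hdesc
  exact Nat.le_of_mul_le_mul_left hdesc (factorial_pos i)

theorem one_add_mul_div_pow_le_sum_choose {v : ℝ} (hv : 0 ≤ v) {k d : ℕ} (hkd : k ≤ d) :
    (1 + v * d / k) ^ k ≤ ∑ i ∈ Finset.range (k + 1), (d.choose i : ℝ) * v ^ i := by
  rw [add_comm, add_pow]
  refine Finset.sum_le_sum fun i _ => ?_
  have hchoose : (k.choose i : ℝ) * d ^ i ≤ d.choose i * k ^ i := by
    exact_mod_cast Nat.choose_mul_pow_le_choose_mul_pow hkd i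
  calc (v * d / k) ^ i * 1 ^ (k - i) * k.choose i
      = v ^ i * (k.choose i * d ^ i / k ^ i) := by ring
    _ ≤ v ^ i * d.choose i := by
      gcongr
      exact div_le_of_le_mul₀ (by positivity) (by positivity) hchoose
    _ = d.choose i * v ^ i := mul_comm _ _

theorem logb_le_of_le_pow {b x : ℝ} {d : ℕ} (hb : 1 < b) (hx : 0 < x) (h : x ≤ b ^ d) :
    logb b x ≤ d :=
  (logb_le_iff_le_rpow hb hx).mpr (by rwa [rpow_natCast])

theorem le_pow_ceil_logb {b x : ℝ} (hb : 1 < b) (hx : 0 < x) : x ≤ b ^ ⌈logb b x⌉₊ := by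
  rw [← rpow_natCast, ← logb_le_iff_le_rpow hb hx]
  exact Nat.le_ceil _

/-- Both cases compare with `N = (1 + v) ^ L`: for `k ≤ L` the base `1 + c / L` only grows when
`L` is replaced by `k`, and for `L ≤ k` Bernoulli's inequality bounds `(1 + v) ^ (L / k)`. -/
theorem le_one_add_div_pow {v c N : ℝ} {k : ℕ} (hv : 0 < v) (hN : 1 < N)
    (hc : v ≤ c / logb (1 + v) N) (hk : N ≤ (1 + c / logb (1 + v) N) ^ k) :
    N ≤ (1 + c / k) ^ k := by
  set L := logb (1 + v) N
  have hL : 0 < L := logb_pos (by linarith) hN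
  have hc0 : 0 ≤ c := by nlinarith [(le_div_iff₀ hL).mp hc]
  have hk0 : (0 : ℝ) < k := by
    rcases Nat.eq_zero_or_pos k with rfl | hk0
    · simp at hk; linarith
    · exact_mod_cast hk0
  rcases le_total (k : ℝ) L with hkL | hLk
  · refine hk.trans (pow_le_pow_left₀ (by positivity) ?_ k)
    gcongr
  · calc N = ((1 + v) ^ (L / k)) ^ k := by
          rw [← rpow_natCast, ← rpow_mul (by positivity), div_mul_cancel₀ _ hk0.ne',
            rpow_logb (by linarith) (by linarith) (by linarith)]
      _ ≤ (1 + L / k * v) ^ k := by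
          gcongr
          exact rpow_one_add_le_one_add_mul_self (by linarith) (by positivity)
            ((div_le_one hk0).mpr hLk)
      _ ≤ (1 + c / k) ^ k := by
          rw [div_mul_eq_mul_div, mul_comm L]
          gcongr
          exact (le_div_iff₀ hL).mp hc

theorem mul_one_div_rpow_le_pow_ceil {s N a : ℝ} (hs0 : 0 < s) (hs1 : s ≤ 1) (hN : 0 < N)
    (hy : 0 ≤ log N / a) : s * (1 / N) ^ (log s⁻¹ / a) ≤ s ^ ⌈log N / a⌉₊ := by
  have hrw : (1 / N) ^ (log s⁻¹ / a) = s ^ (log N / a) := by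
    rw [rpow_def_of_pos (by positivity), rpow_def_of_pos hs0, one_div, log_inv, log_inv]
    ring_nf
  calc s * (1 / N) ^ (log s⁻¹ / a) = s ^ (log N / a + 1) := by
        rw [hrw, rpow_add_one hs0.ne']; ring
    _ ≤ s ^ (⌈log N / a⌉₊ : ℝ) := rpow_le_rpow_of_exponent_ge hs0 hs1 (Nat.ceil_lt_add_one hy).le
    _ = s ^ ⌈log N / a⌉₊ := rpow_natCast _ _

theorem Antitone.eq_of_lt_ncard_add {α : Type*} [PartialOrder α] {σ : ℕ+ → α} (hσ : Antitone σ)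
    {a m : ℕ+} (ham : a ≤ m) (hm : (m : ℕ) < {m' | a ≤ m' ∧ σ m' = σ a}.ncard + a) :
    σ m = σ a := by
  by_contra hne
  have hsub : {m' | a ≤ m' ∧ σ m' = σ a} ⊆ Ico a m := fun m' ⟨ha, heq⟩ =>
    ⟨ha, lt_of_not_ge fun hm' => hne (le_antisymm (hσ ham) (heq.symm.trans_le (hσ hm')))⟩
  have hcard := ncard_le_ncard hsub (finite_Ico a m)
  rw [← Finset.coe_Ico, ncard_coe_finset, PNat.card_Ico] at hcard
  have : (a : ℕ) ≤ m := ham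
  omega

theorem Antitone.le_of_le_ncard {α : Type*} [LinearOrder α] {τ : ℕ+ → α} (hτ : Antitone τ)
    {t : α} {n : ℕ+} (hn : (n : ℕ) ≤ {m | t ≤ τ m}.ncard) : t ≤ τ n := by
  by_contra! hlt
  have hsub : {m | t ≤ τ m} ⊆ Ico 1 n := fun m hm =>
    ⟨one_le, lt_of_not_ge fun hnm => (hm.trans (hτ hnm)).not_gt hlt⟩
  have hcard := ncard_le_ncard hsub (finite_Ico 1 n)
  rw [← Finset.coe_Ico, ncard_coe_finset, PNat.card_Ico, PNat.one_coe] at hcard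
  have := n.pos
  omega

theorem finite_setOf_le_prod {ι : Type*} [Fintype ι] {σ : ℕ+ → ℝ} (h0 : ∀ m, 0 ≤ σ m)
    (h1 : ∀ m, σ m ≤ 1) (hσ : Tendsto σ atTop (nhds 0)) {t : ℝ} (ht : 0 < t) :
    {x : ι → ℕ+ | t ≤ ∏ j, σ (x j)}.Finite := by
  classical
  obtain ⟨M, hM⟩ := eventually_atTop.mp (hσ.eventually_lt_const ht)
  refine (Finite.pi fun _ => finite_Iio M).subset fun x hx j _ => ?_
  have hprod : ∏ i, σ (x i) ≤ σ (x j) := by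
    rw [← Finset.mul_prod_erase _ _ (Finset.mem_univ j)]
    exact mul_le_of_le_one_right (h0 _) (Finset.prod_le_one (fun i _ => h0 _) fun i _ => h1 _)
  exact lt_of_not_ge fun hj => (hM _ hj).not_ge (hx.trans hprod)

open Finset

theorem sum_pow_card_filter_card_le (ι : Type*) [Fintype ι] (k v : ℕ) :
    ∑ s : Finset ι with #s ≤ k, v ^ #s =
      ∑ i ∈ range (k + 1), (Fintype.card ι).choose i * v ^ i := by
  rw [← sum_fiberwise_of_maps_to (g := card) (t := range (k + 1))
    fun s hs => mem_range.mpr (Nat.lt_succ_of_le (mem_filter.mp hs).2)]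
  refine sum_congr rfl fun i hi => ?_
  have hfiber : {s ∈ ({s : Finset ι | #s ≤ k} : Finset _) | #s = i} = powersetCard i univ := by
    ext s
    simp only [mem_filter, mem_powersetCard_univ]
    exact ⟨fun h => h.2, fun h => ⟨⟨mem_univ s, h ▸ Nat.lt_succ_iff.mp (mem_range.mp hi)⟩, h⟩⟩
  rw [hfiber, sum_congr rfl fun s hs => by rw [(mem_powersetCard_univ.mp hs)], sum_const,
    card_powersetCard, card_univ, smul_eq_mul]

section SupportedBox

variable {ι α : Type*} [Fintype ι] [DecidableEq ι] [One α]

def supportedBox (P : Finset α) (s : Finset ι) : Finset (ι → α) :=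
  Fintype.piFinset fun j => if j ∈ s then P else {1}

variable {P : Finset α} {s t : Finset ι} {x : ι → α}

theorem card_supportedBox : #(supportedBox P s) = #P ^ #s := by
  rw [supportedBox, Fintype.card_piFinset]
  simp [apply_ite card, prod_ite_mem]

theorem mem_iff_ne_one_of_mem_supportedBox (hP : 1 ∉ P) (hx : x ∈ supportedBox P s) (j : ι) :
    j ∈ s ↔ x j ≠ 1 := by
  have hxj := Fintype.mem_piFinset.mp hx j
  split_ifs at hxj with hj
  · exact iff_of_true hj fun h => hP (h ▸ hxj)
  · simpa [hj] using hxj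

theorem disjoint_supportedBox (hP : 1 ∉ P) (hst : s ≠ t) :
    Disjoint (supportedBox P s) (supportedBox P t) := by
  refine disjoint_left.mpr fun x hs ht => hst ?_
  ext j
  rw [mem_iff_ne_one_of_mem_supportedBox hP hs, mem_iff_ne_one_of_mem_supportedBox hP ht]

theorem prod_eq_pow_card_of_mem_supportedBox {σ : α → ℝ} {c : ℝ} (hσ1 : σ 1 = 1)
    (hc : ∀ m ∈ P, σ m = c) (hx : x ∈ supportedBox P s) : ∏ j, σ (x j) = c ^ #s := by
  have hxj := Fintype.mem_piFinset.mp hx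
  rw [← prod_mul_prod_compl s, prod_eq_pow_card fun j hj => hc _ (by simpa [hj] using hxj j),
    prod_eq_one fun j hj => by
      rw [show x j = 1 by simpa [mem_compl.mp hj] using hxj j, hσ1], mul_one]

theorem sum_choose_mul_pow_le_ncard_setOf_pow_le_prod [DecidableEq α] {σ : α → ℝ} {c : ℝ}
    (hP : 1 ∉ P) (hσ1 : σ 1 = 1) (hc : ∀ m ∈ P, σ m = c) (hc0 : 0 ≤ c) (hc1 : c ≤ 1) (k : ℕ)
    (hfin : {x : ι → α | c ^ k ≤ ∏ j, σ (x j)}.Finite) :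
    ∑ i ∈ range (k + 1), (Fintype.card ι).choose i * #P ^ i ≤
      {x : ι → α | c ^ k ≤ ∏ j, σ (x j)}.ncard := by
  simp only [← sum_pow_card_filter_card_le, ← card_supportedBox]
  rw [← card_biUnion fun s _ t _ hst => disjoint_supportedBox hP hst, ← ncard_coe_finset]
  refine ncard_le_ncard (fun x hx => ?_) hfin
  obtain ⟨s, hs, hxs⟩ := mem_biUnion.mp hx
  change c ^ k ≤ _
  rw [prod_eq_pow_card_of_mem_supportedBox hσ1 hc hxs]
  exact pow_le_pow_of_le_one hc0 hc1 (mem_filter.mp hs).2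

end SupportedBox

theorem stmt_10_general (d : ℕ) (σ τ : ℕ+ → ℝ)
    (hσa : Antitone σ) (hσ0 : Filter.Tendsto σ Filter.atTop (nhds 0))
    (hσ1 : σ 1 = 1) (hσ2pos : 0 < σ 2) (hσ2lt : σ 2 < 1)
    (hτa : Antitone τ)
    -- τ is the nonincreasing rearrangement of the d-th tensor power of σ
    (hre : ∀ t : ℝ, 0 < t →
      {n : ℕ+ | t ≤ τ n}.ncard = {x : Fin d → ℕ+ | t ≤ ∏ j, σ (x j)}.ncard)
    (v : ℕ) (hv : v = {m : ℕ+ | 2 ≤ m ∧ σ m = σ 2}.ncard) (hvpos : 0 < v)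
    (n : ℕ+) (hn2 : 2 ≤ n) (hn : (n : ℕ) ≤ (1 + v) ^ d) :
    σ 2 * (1 / ((n : ℕ) : ℝ)) ^
        (Real.log (σ 2)⁻¹ /
          Real.log (1 + ((v : ℝ) * d) / Real.logb (1 + (v : ℝ)) ((n : ℕ) : ℝ)))
      ≤ τ n := by
  have hplateau : ∀ m ∈ Finset.Icc (2 : ℕ+) v.succPNat, σ m = σ 2 := fun m hm => by
    obtain ⟨h2m, hmv⟩ := Finset.mem_Icc.mp hm
    have : (m : ℕ) ≤ v + 1 := hmv
    exact hσa.eq_of_lt_ncard_add h2m (by rw [← hv, PNat.val_ofNat]; omega)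
  have hv0 : (0 : ℝ) < v := by exact_mod_cast hvpos
  have hN : 1 < ((n : ℕ) : ℝ) := by exact_mod_cast (hn2 : 2 ≤ (n : ℕ))
  have hNd : ((n : ℕ) : ℝ) ≤ (1 + v) ^ d := by exact_mod_cast hn
  set N := ((n : ℕ) : ℝ)
  set L := logb (1 + (v : ℝ)) N
  have hA : (v : ℝ) ≤ v * d / L := (le_div_iff₀ (logb_pos (by linarith) hN)).mpr <|
    mul_le_mul_of_nonneg_left (logb_le_of_le_pow (by linarith) (by linarith) hNd) hv0.le
  set k := ⌈logb (1 + v * d / L) N⌉₊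
  have hkd : k ≤ d := Nat.ceil_le.mpr <| logb_le_of_le_pow (by linarith) (by linarith) <|
    hNd.trans (pow_le_pow_left₀ (by positivity) (by linarith) d)
  have hcount : (n : ℕ) ≤ {x : Fin d → ℕ+ | σ 2 ^ k ≤ ∏ j, σ (x j)}.ncard := by
    have hbox := sum_choose_mul_pow_le_ncard_setOf_pow_le_prod (ι := Fin d) (by simp) hσ1 hplateau
      hσ2pos.le hσ2lt.le k (finite_setOf_le_prod (hσa.le_of_tendsto hσ0)
        (fun m => hσ1 ▸ hσa one_le) hσ0 (by positivity))
    rw [show #(Finset.Icc (2 : ℕ+) v.succPNat) = v by simp, Fintype.card_fin] at hbox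
    refine (Nat.cast_le (α := ℝ)).mp <| (le_one_add_div_pow hv0 hN hA
      (le_pow_ceil_logb (by linarith) (by linarith))).trans <|
        (one_add_mul_div_pow_le_sum_choose hv0.le hkd).trans ?_
    exact_mod_cast hbox
  have hτn : σ 2 ^ k ≤ τ n := hτa.le_of_le_ncard (by rwa [hre _ (by positivity)])
  exact (mul_one_div_rpow_le_pow_ceil hσ2pos hσ2lt.le (by positivity)
    (div_nonneg (log_nonneg hN.le) (log_nonneg (by linarith)))).trans hτn

theorem stmt_10 (d : ℕ) (hd : 1 ≤ d) (σ τ : ℕ+ → ℝ)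
    (hσa : Antitone σ) (hσ0 : Filter.Tendsto σ Filter.atTop (nhds 0))
    (hσ1 : σ 1 = 1) (hσ2pos : 0 < σ 2) (hσ2lt : σ 2 < 1)
    (hτa : Antitone τ)
    -- τ is the nonincreasing rearrangement of the d-th tensor power of σ
    (hre : ∀ t : ℝ, 0 < t →
      {n : ℕ+ | t ≤ τ n}.ncard = {x : Fin d → ℕ+ | t ≤ ∏ j, σ (x j)}.ncard)
    (v : ℕ) (hv : v = {m : ℕ+ | 2 ≤ m ∧ σ m = σ 2}.ncard) (hvpos : 0 < v)
    (n : ℕ+) (hn2 : 2 ≤ n) (hn : (n : ℕ) ≤ (1 + v) ^ d) :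
    σ 2 * (1 / ((n : ℕ) : ℝ)) ^
        (Real.log (σ 2)⁻¹ /
          Real.log (1 + ((v : ℝ) * d) / Real.logb (1 + (v : ℝ)) ((n : ℕ) : ℝ)))
      ≤ τ n :=
  stmt_10_general d σ τ hσa hσ0 hσ1 hσ2pos hσ2lt hτa hre v hv hvpos n hn2 hn
end

section
/- Let σ(n) = 2^{-k} for n ∈ {2^k, ..., 2^{k+1}-1}, k ∈ ℕ_0, and let τ be the nonincreasing rearrangement of its d-th tensor power. Then for each k ∈ ℕ_0, the number of indices n with τ(n) = 2^{-k} equals 2^k · binom(k+d-1, d-1). -/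
/-!
Writing `L x = ∑ j, log₂ x_j`, the tensor power is `∏ j, σ (x j) = 2 ^ (-L x)`. The points with
`L x = k` are counted by choosing the binary lengths `P : Fin d → ℕ` with `∑ P = k`
(`binom(k+d-1, d-1)` ways) and then a number of length `P j` in each coordinate
(`∏ 2 ^ P j = 2 ^ k` ways). Since the superlevel sets at positive levels are finite, the counts
`#{t ≤ ·}` determine the number of points at each level: the value set of either function has a
gap just above `2 ^ (-k)`, so the level set is the difference of two superlevel sets.
-/

open Filter Real Set

open scoped Topology

section Rearrangement

variable {α β : Type*} {f : α → ℝ} {g : β → ℝ} {q : ℝ}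

theorem ncard_setOf_eq_eq_sub (hf : {a | q ≤ f a}.Finite) :
    {a | f a = q}.ncard = {a | q ≤ f a}.ncard - {a | q < f a}.ncard := by
  have hsplit : {a | f a = q} = {a | q ≤ f a} \ {a | q < f a} := by
    ext a
    simp only [mem_ofPred_eq, Set.mem_sdiff, not_lt]
    exact ⟨fun h => ⟨h.ge, h.le⟩, fun h => le_antisymm h.2 h.1⟩
  rw [hsplit]
  exact ncard_sdiff' (fun a (ha : q < f a) => ha.le) hf

theorem eventually_setOf_le_eq_setOf_lt (hf : {a | q ≤ f a}.Finite) :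
    ∀ᶠ t in 𝓝[>] q, {a | t ≤ f a} = {a | q < f a} := by
  have hlt : {a | q < f a}.Finite := hf.subset fun a (ha : q < f a) => ha.le
  filter_upwards [self_mem_nhdsWithin,
    (eventually_all_finite hlt).2 fun a ha => Ioc_mem_nhdsGT ha] with t htq ht
  ext a
  exact ⟨fun (h : t ≤ f a) => lt_of_lt_of_le htq h, fun (h : q < f a) => (ht a h).2⟩

theorem ncard_setOf_eq_of_ncard_setOf_le_eq
    (h : ∀ t, 0 < t → {b | t ≤ g b}.ncard = {a | t ≤ f a}.ncard) (hq : 0 < q)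
    (hf : {a | q ≤ f a}.Finite) (hne : {a | q ≤ f a}.Nonempty) :
    {b | g b = q}.ncard = {a | f a = q}.ncard := by
  have hg : {b | q ≤ g b}.Finite :=
    finite_of_ncard_pos (by rw [h q hq]; exact (ncard_pos hf).2 hne)
  obtain ⟨t, htq, hft, hgt⟩ := (eventually_mem_nhdsWithin.and
    ((eventually_setOf_le_eq_setOf_lt hf).and (eventually_setOf_le_eq_setOf_lt hg))).exists
  rw [ncard_setOf_eq_eq_sub hg, ncard_setOf_eq_eq_sub hf, ← hft, ← hgt, h q hq,
    h t (lt_trans hq htq)]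

end Rearrangement

section DyadicCount

theorem PNat.card_log_eq (m : ℕ) : Nat.card {n : ℕ+ // Nat.log 2 n = m} = 2 ^ m := by
  have himage : PNat.val '' {n : ℕ+ | Nat.log 2 n = m} = Ico (2 ^ m) (2 ^ (m + 1)) := by
    ext n
    constructor
    · rintro ⟨n, hn, rfl⟩
      exact (Nat.log_eq_iff (Or.inr ⟨one_lt_two, n.ne_zero⟩)).1 hn
    · intro hn
      have hpos : 0 < n := lt_of_lt_of_le (Nat.two_pow_pos m) hn.1
      exact ⟨⟨n, hpos⟩, (Nat.log_eq_iff (Or.inr ⟨one_lt_two, hpos.ne'⟩)).2 hn, rfl⟩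
  change Nat.card ({n : ℕ+ | Nat.log 2 n = m} : Set ℕ+) = _
  rw [Nat.card_coe_set_eq, ← ncard_image_of_injective _ PNat.coe_injective, himage,
    ncard_Ico_nat, pow_succ]
  omega

variable {ι : Type*} [Fintype ι]

theorem finite_setOf_sum_log_le (k : ℕ) :
    {x : ι → ℕ+ | ∑ i, Nat.log 2 (x i) ≤ k}.Finite := by
  have hlog : {n : ℕ+ | Nat.log 2 n ≤ k}.Finite :=
    ((finite_lt_nat (2 ^ (k + 1))).preimage PNat.coe_injective.injOn).subset fun n hn =>
      lt_of_lt_of_le (Nat.lt_pow_succ_log_self one_lt_two n)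
        (Nat.pow_le_pow_right two_pos (Nat.succ_le_succ hn))
  refine (Finite.pi fun _ => hlog).subset fun x hx i _ => ?_
  exact le_trans (Finset.single_le_sum (fun j _ => Nat.zero_le _) (Finset.mem_univ i)) hx

theorem card_sum_eq_choose (k : ℕ) :
    Nat.card {P : ι → ℕ // ∑ i, P i = k} = (Fintype.card ι + k - 1).choose k := by
  classical
  rw [← Nat.card_congr (Sym.equivNatSumOfFintype ι k), Nat.card_eq_fintype_card,
    Sym.card_sym_eq_choose]

theorem card_sum_log_eq_two_pow_mul (k : ℕ) :
    Nat.card {x : ι → ℕ+ // ∑ i, Nat.log 2 (x i) = k} =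
      2 ^ k * Nat.card {P : ι → ℕ // ∑ i, P i = k} := by
  classical
  have : Finite {P : ι → ℕ // ∑ i, P i = k} := .of_equiv _ (Sym.equivNatSumOfFintype ι k)
  have := Fintype.ofFinite {P : ι → ℕ // ∑ i, P i = k}
  have hfiber (P : {P : ι → ℕ // ∑ i, P i = k}) :
      Nat.card {x : ι → ℕ+ // (fun i => Nat.log 2 (x i)) = P.1} = 2 ^ k := by
    rw [Nat.card_congr ((Equiv.subtypeEquivRight fun _ => funext_iff).trans
      (Equiv.subtypePiEquivPi (p := fun i (n : ℕ+) => Nat.log 2 n = P.1 i))), Nat.card_pi]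
    simp only [PNat.card_log_eq, Finset.prod_pow_eq_pow_sum, P.2]
  have (P : {P : ι → ℕ // ∑ i, P i = k}) :
      Finite {x : ι → ℕ+ // (fun i => Nat.log 2 (x i)) = P.1} :=
    Nat.finite_of_card_ne_zero (by rw [hfiber P]; positivity)
  have hsigma : (Σ P : {P : ι → ℕ // ∑ i, P i = k},
      {x : ι → ℕ+ // (fun i => Nat.log 2 (x i)) = P.1}) ≃
      {x : ι → ℕ+ // ∑ i, Nat.log 2 (x i) = k} :=
    Equiv.sigmaSubtypeFiberEquivSubtype _ fun _ => Iff.rfl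
  rw [← Nat.card_congr hsigma, Nat.card_sigma, Finset.sum_congr rfl fun P _ => hfiber P,
    Finset.sum_const, Finset.card_univ, Nat.card_eq_fintype_card, smul_eq_mul, mul_comm]

end DyadicCount

theorem prod_two_zpow_neg {ι : Type*} [Fintype ι] (m : ι → ℕ) :
    ∏ i, (2 : ℝ) ^ (-(m i : ℤ)) = 2 ^ (-((∑ i, m i : ℕ) : ℤ)) := by
  simp only [zpow_neg, zpow_natCast, ← inv_pow, Finset.prod_pow_eq_pow_sum]

theorem two_zpow_neg_le_iff {m n : ℕ} :
    (2 : ℝ) ^ (-(m : ℤ)) ≤ 2 ^ (-(n : ℤ)) ↔ n ≤ m := by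
  rw [zpow_le_zpow_iff_right₀ one_lt_two, neg_le_neg_iff, Nat.cast_le]

theorem two_zpow_neg_inj {m n : ℕ} : (2 : ℝ) ^ (-(m : ℤ)) = 2 ^ (-(n : ℤ)) ↔ m = n := by
  rw [(zpow_right_injective₀ two_pos (by norm_num)).eq_iff, neg_inj, Nat.cast_inj]

theorem stmt_11_general (d : ℕ) (hd : 1 ≤ d) (σ τ : ℕ+ → ℝ)
    (hσ : ∀ n : ℕ+, σ n = (2 : ℝ) ^ (-(Nat.log 2 (n : ℕ) : ℤ)))
    -- τ is the nonincreasing rearrangement of the d-th tensor power of σ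
    (hre : ∀ t : ℝ, 0 < t →
      {n : ℕ+ | t ≤ τ n}.ncard = {x : Fin d → ℕ+ | t ≤ ∏ j, σ (x j)}.ncard)
    (k : ℕ) :
    {n : ℕ+ | τ n = (2 : ℝ) ^ (-(k : ℤ))}.ncard = 2 ^ k * Nat.choose (k + d - 1) (d - 1) := by
  have hprod (x : Fin d → ℕ+) :
      ∏ j, σ (x j) = (2 : ℝ) ^ (-((∑ j, Nat.log 2 (x j : ℕ) : ℕ) : ℤ)) := by
    simp only [hσ, prod_two_zpow_neg]
  have hle : {x : Fin d → ℕ+ | (2 : ℝ) ^ (-(k : ℤ)) ≤ ∏ j, σ (x j)} =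
      {x | ∑ j, Nat.log 2 (x j) ≤ k} := by
    simp only [hprod, two_zpow_neg_le_iff]
  have heq : {x : Fin d → ℕ+ | ∏ j, σ (x j) = (2 : ℝ) ^ (-(k : ℤ))} =
      {x | ∑ j, Nat.log 2 (x j) = k} := by
    simp only [hprod, two_zpow_neg_inj]
  have hne : (fun _ => 1 : Fin d → ℕ+) ∈ {x : Fin d → ℕ+ | ∑ j, Nat.log 2 (x j) ≤ k} := by
    simp
  obtain ⟨e, rfl⟩ := Nat.exists_eq_add_of_le' hd
  rw [ncard_setOf_eq_of_ncard_setOf_le_eq hre (by positivity)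
    (hle ▸ finite_setOf_sum_log_le k) (hle ▸ ⟨_, hne⟩), heq, ← Nat.card_coe_set_eq,
    coe_ofPred, card_sum_log_eq_two_pow_mul, card_sum_eq_choose, Fintype.card_fin,
    show e + 1 + k - 1 = k + e by omega, show k + (e + 1) - 1 = k + e by omega,
    Nat.add_sub_cancel, Nat.choose_symm_add]

theorem stmt_11 (d : ℕ) (hd : 1 ≤ d) (σ τ : ℕ+ → ℝ)
    (hσ : ∀ n : ℕ+, σ n = (2 : ℝ) ^ (-(Nat.log 2 (n : ℕ) : ℤ)))
    (hτa : Antitone τ)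
    -- τ is the nonincreasing rearrangement of the d-th tensor power of σ
    (hre : ∀ t : ℝ, 0 < t →
      {n : ℕ+ | t ≤ τ n}.ncard = {x : Fin d → ℕ+ | t ≤ ∏ j, σ (x j)}.ncard)
    (k : ℕ) :
    {n : ℕ+ | τ n = (2 : ℝ) ^ (-(k : ℤ))}.ncard = 2 ^ k * Nat.choose (k + d - 1) (d - 1) :=
  stmt_11_general d hd σ τ hσ hre k
end

section
/- For the sequence σ(n) = 2^{-⌊log_2 n⌋} and τ the nonincreasing rearrangement of its d-th tensor power, one has limsup_{n→∞} τ(n)·n/(log n)^{d-1} = 2·(log_2 e)^{d-1}/(d-1)! and liminf_{n→∞} τ(n)·n/(log n)^{d-1} = (log_2 e)^{d-1}/(d-1)!. In particular, for d ≥ 2, c_1^d/(d-1)! < c_d < C_d < C_1^d/(d-1)!, where C_1 = limsup σ(n)n = 2 and c_1 = liminf σ(n)n = 1. -/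
/-!
Since `σ` equals `2^{-k}` on exactly `2^k` integers, the number of `x ∈ ℕ₊^d` with
`∑ ⌊log₂ x_j⌋ < c` is `M(c) = ∑_{j<c} 2^j C(j+d-1, d-1)`, by induction on `d` along the first
coordinate. A nonincreasing sequence is determined by its distribution function, so
`τ n = 2^{-c}` exactly on the block `M(c) < n ≤ M(c+1)`. Tannery's theorem gives
`M(c) ~ 2^c c^{d-1}/(d-1)!`, hence `log n ~ c log 2` on the block, and `τ(n) n/(log n)^{d-1}`
grows from about `(log₂ e)^{d-1}/(d-1)!` at the start of each block to twice that at its end.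
-/

open Filter Real Set Topology
open scoped Nat

namespace PNat

lemma finite_setOf_coe_le (N : ℕ) : {n : ℕ+ | (n : ℕ) ≤ N}.Finite :=
  (Set.finite_Iic N).preimage PNat.coe_injective.injOn

lemma ncard_setOf_coe_le (N : ℕ) : {n : ℕ+ | (n : ℕ) ≤ N}.ncard = N := by
  have himage : ((↑) : ℕ+ → ℕ) '' {n : ℕ+ | (n : ℕ) ≤ N} = ↑(Finset.Ioc 0 N) := by
    ext m
    simp only [Set.mem_image, Set.mem_ofPred_eq, Finset.coe_Ioc, Set.mem_Ioc]
    exact ⟨fun ⟨n, hn, hm⟩ => hm ▸ ⟨n.pos, hn⟩, fun h => ⟨⟨m, h.1⟩, h.2, rfl⟩⟩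
  rw [← Set.ncard_image_of_injective _ PNat.coe_injective, himage, Set.ncard_coe_finset,
    Nat.card_Ioc, Nat.sub_zero]

lemma ncard_setOf_log_eq (i : ℕ) : {n : ℕ+ | Nat.log 2 n = i}.ncard = 2 ^ i := by
  have himage : ((↑) : ℕ+ → ℕ) '' {n : ℕ+ | Nat.log 2 n = i} =
      ↑(Finset.Ico (2 ^ i) (2 ^ (i + 1))) := by
    ext m
    simp only [Set.mem_image, Set.mem_ofPred_eq, Finset.coe_Ico, Set.mem_Ico]
    constructor
    · rintro ⟨n, hn, rfl⟩
      exact (Nat.log_eq_iff (Or.inr ⟨one_lt_two, n.ne_zero⟩)).mp hn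
    · intro hm
      have hm0 : m ≠ 0 := ((Nat.two_pow_pos i).trans_le hm.1).ne'
      exact ⟨⟨m, Nat.pos_of_ne_zero hm0⟩, (Nat.log_eq_iff (Or.inr ⟨one_lt_two, hm0⟩)).mpr hm, rfl⟩
  rw [← Set.ncard_image_of_injective _ PNat.coe_injective, himage, Set.ncard_coe_finset,
    Nat.card_Ico, pow_succ]
  omega

theorem eq_setOf_coe_le_ncard {s : Set ℕ+} (hs : IsLowerSet s) (hfin : s.Finite) :
    s = {n : ℕ+ | (n : ℕ) ≤ s.ncard} := by
  ext n
  constructor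
  · intro hn
    have hsub : {m : ℕ+ | (m : ℕ) ≤ n} ⊆ s := fun m hm => hs (PNat.coe_le_coe _ _ |>.mp hm) hn
    show (n : ℕ) ≤ s.ncard
    simpa only [ncard_setOf_coe_le] using Set.ncard_le_ncard hsub hfin
  · intro hn
    by_contra hns
    have hsub : s ⊆ {m : ℕ+ | (m : ℕ) ≤ n - 1} := fun m hm => by
      by_contra hmn
      simp only [Set.mem_ofPred_eq, not_le] at hmn
      exact hns (hs ((PNat.coe_le_coe _ _).mp (by omega)) hm)
    have hcard := Set.ncard_le_ncard hsub (finite_setOf_coe_le _)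
    rw [ncard_setOf_coe_le] at hcard
    simp only [Set.mem_ofPred_eq] at hn
    have := n.pos
    omega

lemma tendsto_atTop_of_le_coe {s : ℕ → ℕ+} (hs : ∀ c, c ≤ (s c : ℕ)) :
    Tendsto s atTop atTop :=
  tendsto_atTop_atTop.mpr fun b => ⟨b, fun _ hc => (PNat.coe_le_coe _ _).mp (hc.trans (hs _))⟩

end PNat

theorem eq_of_ncard_setOf_le_eq {τ τ₀ : ℕ+ → ℝ} (hτ : Antitone τ) (hτ₀ : Antitone τ₀)
    (hpos : ∀ n, 0 < τ₀ n) (hfin : ∀ t, 0 < t → {n | t ≤ τ₀ n}.Finite)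
    (h : ∀ t, 0 < t → {n | t ≤ τ n}.ncard = {n | t ≤ τ₀ n}.ncard) : τ = τ₀ := by
  have lower (g : ℕ+ → ℝ) (hg : Antitone g) (t : ℝ) : IsLowerSet {n | t ≤ g n} :=
    fun _ _ hba ha => le_trans ha (hg hba)
  have key (n : ℕ+) (t : ℝ) (ht : 0 < t) (hfinτ : {n | t ≤ τ n}.Finite) :
      t ≤ τ n ↔ t ≤ τ₀ n := by
    have hτ_eq := PNat.eq_setOf_coe_le_ncard (lower τ hτ t) hfinτ
    have hτ₀_eq := PNat.eq_setOf_coe_le_ncard (lower τ₀ hτ₀ t) (hfin t ht)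
    rw [h t ht] at hτ_eq
    exact Set.ext_iff.mp (hτ_eq.trans hτ₀_eq.symm) n
  funext n
  have hfin₁ : {m | τ₀ n ≤ τ m}.Finite := by
    apply Set.finite_of_ncard_pos
    rw [h _ (hpos n)]
    exact (Set.ncard_pos (hfin _ (hpos n))).mpr ⟨n, show τ₀ n ≤ τ₀ n from le_rfl⟩
  have hge : τ₀ n ≤ τ n := (key n _ (hpos n) hfin₁).mpr le_rfl
  have hle : τ n ≤ τ₀ n :=
    (key n _ ((hpos n).trans_le hge) (hfin₁.subset fun _ hm => hge.trans hm)).mp le_rfl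
  exact le_antisymm hle hge

theorem limsup_eq_of_eventuallyLE_of_tendsto_comp {ι κ : Type*} {F : Filter ι} {G : Filter κ}
    [G.NeBot] {f u : ι → ℝ} {s : κ → ι} {a : ℝ} (hu : Tendsto u F (𝓝 a)) (hfu : f ≤ᶠ[F] u)
    (hs : Tendsto s G F) (hfs : Tendsto (f ∘ s) G (𝓝 a)) : limsup f F = a := by
  have := hs.neBot
  have hcobdd : IsCoboundedUnder (· ≤ ·) F f := IsCoboundedUnder.of_frequently_ge (a := a - 1)
    (hs.frequently (hfs.eventually (eventually_ge_nhds (sub_one_lt a))).frequently)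
  refine le_antisymm ((limsup_le_limsup hfu hcobdd hu.isBoundedUnder_le).trans_eq hu.limsup_eq) ?_
  calc a = limsup (f ∘ s) G := hfs.limsup_eq.symm
    _ ≤ limsup f F :=
      hs.limsup_comp_le_limsup hfs.isBoundedUnder_ge.isCoboundedUnder_le
        (hu.isBoundedUnder_le.mono_le hfu)

theorem liminf_eq_of_eventuallyLE_of_tendsto_comp {ι κ : Type*} {F : Filter ι} {G : Filter κ}
    [G.NeBot] {f v : ι → ℝ} {s : κ → ι} {a : ℝ} (hv : Tendsto v F (𝓝 a)) (hvf : v ≤ᶠ[F] f)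
    (hs : Tendsto s G F) (hfs : Tendsto (f ∘ s) G (𝓝 a)) : liminf f F = a := by
  have := hs.neBot
  have hcobdd : IsCoboundedUnder (· ≥ ·) F f := IsCoboundedUnder.of_frequently_le (a := a + 1)
    (hs.frequently (hfs.eventually (eventually_le_nhds (lt_add_one a))).frequently)
  refine le_antisymm ?_
    (hv.liminf_eq.symm.trans_le (liminf_le_liminf hvf hv.isBoundedUnder_ge hcobdd))
  calc liminf f F ≤ liminf (f ∘ s) G :=
      hs.liminf_le_liminf_comp hfs.isBoundedUnder_le.isCoboundedUnder_ge
        (hv.isBoundedUnder_ge.mono_ge hvf)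
    _ = a := hfs.liminf_eq

namespace DyadicRearrangement

def levelSet (d c : ℕ) : Set (Fin d → ℕ+) := {x | ∑ j, Nat.log 2 (x j) < c}

lemma levelSet_finite (d c : ℕ) : (levelSet d c).Finite := by
  refine (Set.Finite.pi fun _ => PNat.finite_setOf_coe_le (2 ^ c)).subset fun x hx j _ => ?_
  have hj : Nat.log 2 (x j) < c := (Finset.single_le_sum (fun i _ => Nat.zero_le (Nat.log 2 (x i)))
    (Finset.mem_univ j)).trans_lt hx
  exact (Nat.lt_pow_of_log_lt one_lt_two hj).le

lemma ncard_levelSet_zero {c : ℕ} (hc : 0 < c) : (levelSet 0 c).ncard = 1 := by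
  have : levelSet 0 c = Set.univ := Set.eq_univ_of_forall fun x => by simpa [levelSet] using hc
  rw [this, Set.ncard_univ, Nat.card_unique]

lemma ncard_levelSet_succ (d c : ℕ) :
    (levelSet (d + 1) c).ncard = ∑ i ∈ Finset.range c, 2 ^ i * (levelSet d (c - i)).ncard := by
  have hdecomp : levelSet (d + 1) c = Fin.consEquiv (fun _ => ℕ+) ''
      ⋃ i ∈ (Finset.range c : Set ℕ), {a : ℕ+ | Nat.log 2 a = i} ×ˢ levelSet d (c - i) := by
    ext x
    obtain ⟨⟨a, y⟩, rfl⟩ := (Fin.consEquiv _).surjective x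
    simp only [levelSet, Set.mem_ofPred_eq, Fin.sum_univ_succ, Set.mem_image_equiv]
    simp only [Fin.consEquiv, Equiv.coe_fn_mk, Fin.cons_zero, Fin.cons_succ, Finset.coe_range,
      mem_Iio, Equiv.symm_mk, Fin.tail_cons, mem_iUnion, mem_prod, mem_ofPred_eq, exists_and_left,
      exists_prop, exists_eq_left']
    omega
  have hblock_finite (i : ℕ) : {a : ℕ+ | Nat.log 2 a = i}.Finite :=
    Set.finite_of_ncard_pos (by rw [PNat.ncard_setOf_log_eq]; positivity)
  rw [hdecomp, Set.ncard_image_of_injective _ (Fin.consEquiv _).injective,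
    Set.Finite.ncard_biUnion (Finset.finite_toSet _)
      (fun i _ => (hblock_finite i).prod (levelSet_finite d _)),
    finsum_mem_coe_finset]
  · simp only [Set.ncard_prod, PNat.ncard_setOf_log_eq]
  · intro i _ j _ hij
    exact Set.disjoint_prod.mpr
      (Or.inl (Set.disjoint_left.mpr fun _ hi hj => hij (hi.symm.trans hj)))

def levelCount (e c : ℕ) : ℕ := ∑ j ∈ Finset.range c, 2 ^ j * (j + e).choose e

lemma levelCount_zero (e : ℕ) : levelCount e 0 = 0 := rfl

lemma levelCount_succ (e c : ℕ) :
    levelCount e (c + 1) = levelCount e c + 2 ^ c * (c + e).choose e :=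
  Finset.sum_range_succ _ _

lemma levelCount_succ_succ (e c : ℕ) :
    levelCount (e + 1) (c + 1) = levelCount e (c + 1) + 2 * levelCount (e + 1) c := by
  have pascal (j : ℕ) : (j + 1 + (e + 1)).choose (e + 1) =
      (j + 1 + e).choose e + (j + (e + 1)).choose (e + 1) := by
    rw [show j + 1 + (e + 1) = (j + 1 + e) + 1 by ring, Nat.choose_succ_succ',
      show j + 1 + e = j + (e + 1) by ring]
  simp only [levelCount, Finset.sum_range_succ', pascal, mul_add, Finset.sum_add_distrib,
    pow_succ', mul_assoc, ← Finset.mul_sum, zero_add, Nat.choose_self]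
  ring

lemma sum_two_pow_mul_levelCount (e c : ℕ) :
    ∑ i ∈ Finset.range c, 2 ^ i * levelCount e (c - i) = levelCount (e + 1) c := by
  induction c with
  | zero => rfl
  | succ c ih =>
    rw [Finset.sum_range_succ', levelCount_succ_succ, ← ih, Finset.mul_sum, add_comm]
    simp only [Nat.add_sub_add_right, pow_zero, one_mul, Nat.sub_zero]
    exact congrArg _ (Finset.sum_congr rfl fun i _ => by ring)

theorem ncard_levelSet (e c : ℕ) : (levelSet (e + 1) c).ncard = levelCount e c := by
  induction e generalizing c with
  | zero =>
    rw [ncard_levelSet_succ, levelCount]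
    refine Finset.sum_congr rfl fun i hi => ?_
    rw [ncard_levelSet_zero (by simp only [Finset.mem_range] at hi; omega)]
    simp
  | succ e ih => simp only [ncard_levelSet_succ (e + 1), ih, sum_two_pow_mul_levelCount]

lemma levelCount_add_one_le (e c : ℕ) : levelCount e c + 1 ≤ levelCount e (c + 1) := by
  rw [levelCount_succ]
  have := Nat.mul_pos (Nat.two_pow_pos c) (Nat.choose_pos (Nat.le_add_left e c))
  omega

lemma levelCount_strictMono (e : ℕ) : StrictMono (levelCount e) :=
  strictMono_nat_of_lt_succ fun c => levelCount_add_one_le e c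

lemma levelCount_succ_pos (e c : ℕ) : 0 < levelCount e (c + 1) :=
  (Nat.zero_le _).trans_lt (levelCount_strictMono e c.lt_succ_self)

lemma two_pow_le_levelCount_add_one (e c : ℕ) : 2 ^ c ≤ levelCount e c + 1 := by
  induction c with
  | zero => simp [levelCount_zero]
  | succ c ih =>
    rw [levelCount_succ, pow_succ]
    have := Nat.le_mul_of_pos_right (2 ^ c) (Nat.choose_pos (Nat.le_add_left e c))
    omega

lemma exists_le_levelCount (e : ℕ) (n : ℕ+) : ∃ c, (n : ℕ) ≤ levelCount e (c + 1) :=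
  ⟨n, by
    have h₁ := two_pow_le_levelCount_add_one e (n + 1)
    have h₂ : (n : ℕ) < 2 ^ (n : ℕ) := Nat.lt_two_pow_self
    rw [pow_succ] at h₁
    omega⟩

def blockIndex (e : ℕ) (n : ℕ+) : ℕ := Nat.find (exists_le_levelCount e n)

lemma blockIndex_lt_iff {e c : ℕ} {n : ℕ+} : blockIndex e n < c ↔ (n : ℕ) ≤ levelCount e c := by
  rw [blockIndex, Nat.find_lt_iff]
  constructor
  · rintro ⟨m, hm, hn⟩
    exact hn.trans ((levelCount_strictMono e).monotone hm)
  · intro hn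
    obtain ⟨m, rfl⟩ : ∃ m, c = m + 1 := Nat.exists_eq_succ_of_ne_zero (by
      rintro rfl
      simp [levelCount_zero] at hn)
    exact ⟨m, m.lt_succ_self, hn⟩

lemma blockIndex_eq_iff {e c : ℕ} {n : ℕ+} :
    blockIndex e n = c ↔ levelCount e c < n ∧ (n : ℕ) ≤ levelCount e (c + 1) := by
  rw [← not_le]
  simp only [← blockIndex_lt_iff]
  omega

lemma blockIndex_toPNat_levelCount_succ (e c : ℕ) (h : 0 < levelCount e (c + 1)) :
    blockIndex e ((levelCount e (c + 1)).toPNat h) = c :=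
  blockIndex_eq_iff.mpr ⟨levelCount_strictMono e c.lt_succ_self, le_rfl⟩

lemma blockIndex_succPNat_levelCount (e c : ℕ) : blockIndex e (levelCount e c).succPNat = c :=
  blockIndex_eq_iff.mpr ⟨Nat.lt_succ_self _, levelCount_add_one_le e c⟩

lemma monotone_blockIndex (e : ℕ) : Monotone (blockIndex e) := fun _ _ hmn =>
  Nat.lt_succ_iff.mp (blockIndex_lt_iff.mpr ((PNat.coe_le_coe _ _).mpr hmn |>.trans
    (blockIndex_lt_iff.mp (Nat.lt_succ_self _))))

lemma tendsto_blockIndex (e : ℕ) : Tendsto (blockIndex e) atTop atTop := by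
  refine tendsto_atTop_atTop.mpr fun c => ⟨(levelCount e c).succPNat, fun n hn => ?_⟩
  by_contra! h
  have : levelCount e c + 1 ≤ (n : ℕ) := hn
  have := blockIndex_lt_iff.mp h
  omega

lemma exists_le_inv_two_pow_iff {t : ℝ} (ht : 0 < t) :
    ∃ c : ℕ, ∀ m : ℕ, t ≤ 2⁻¹ ^ m ↔ m < c := by
  classical
  have hex : ∃ c : ℕ, (2⁻¹ : ℝ) ^ c < t := exists_pow_lt_of_lt_one ht (by norm_num)
  refine ⟨Nat.find hex, fun m => ⟨fun hm => ?_, fun hm => not_lt.mp (Nat.find_min hex hm)⟩⟩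
  by_contra! hle
  exact (Nat.find_spec hex).not_ge (hm.trans (pow_le_pow_of_le_one (by norm_num) (by norm_num) hle))

lemma setOf_le_inv_two_pow_blockIndex (e : ℕ) {t : ℝ} {c : ℕ}
    (hc : ∀ m : ℕ, t ≤ 2⁻¹ ^ m ↔ m < c) :
    {n : ℕ+ | t ≤ 2⁻¹ ^ blockIndex e n} = {n : ℕ+ | (n : ℕ) ≤ levelCount e c} := by
  ext n
  exact (hc _).trans blockIndex_lt_iff

lemma setOf_le_prod_eq_levelSet {d : ℕ} {σ : ℕ+ → ℝ}
    (hσ : ∀ n : ℕ+, σ n = (2 : ℝ) ^ (-(Nat.log 2 (n : ℕ) : ℤ))) {t : ℝ} {c : ℕ}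
    (hc : ∀ m : ℕ, t ≤ 2⁻¹ ^ m ↔ m < c) :
    {x : Fin d → ℕ+ | t ≤ ∏ j, σ (x j)} = levelSet d c := by
  ext x
  simp only [Set.mem_ofPred_eq, hσ, zpow_neg, zpow_natCast, ← inv_pow,
    Finset.prod_pow_eq_pow_sum, hc]
  rfl

theorem eq_inv_two_pow_blockIndex {e : ℕ} {σ τ : ℕ+ → ℝ}
    (hσ : ∀ n : ℕ+, σ n = (2 : ℝ) ^ (-(Nat.log 2 (n : ℕ) : ℤ))) (hτ : Antitone τ)
    (hre : ∀ t : ℝ, 0 < t →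
      {n : ℕ+ | t ≤ τ n}.ncard = {x : Fin (e + 1) → ℕ+ | t ≤ ∏ j, σ (x j)}.ncard) :
    τ = fun n => 2⁻¹ ^ blockIndex e n := by
  refine eq_of_ncard_setOf_le_eq hτ ?_ (fun n => by positivity) (fun t ht => ?_) (fun t ht => ?_)
  · exact fun _ _ hmn =>
      pow_le_pow_of_le_one (by norm_num) (by norm_num) (monotone_blockIndex e hmn)
  · obtain ⟨c, hc⟩ := exists_le_inv_two_pow_iff ht
    rw [setOf_le_inv_two_pow_blockIndex e hc]
    exact PNat.finite_setOf_coe_le _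
  · obtain ⟨c, hc⟩ := exists_le_inv_two_pow_iff ht
    rw [hre t ht, setOf_le_prod_eq_levelSet hσ hc, setOf_le_inv_two_pow_blockIndex e hc,
      ncard_levelSet, PNat.ncard_setOf_coe_le]

lemma tendsto_natCast_add_div_self (b : ℝ) :
    Tendsto (fun c : ℕ => ((c : ℝ) + b) / c) atTop (𝓝 1) := by
  have h := (tendsto_const_nhds (x := (1 : ℝ))).add (tendsto_inv_atTop_nhds_zero_nat.const_mul b)
  rw [mul_zero, add_zero] at h
  refine h.congr' ((eventually_ne_atTop 0).mono fun c hc => ?_)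
  field_simp

lemma tendsto_choose_div_pow (e a : ℕ) :
    Tendsto (fun c : ℕ => ((c - a + e).choose e : ℝ) / (c : ℝ) ^ e) atTop (𝓝 (1 / e !)) := by
  have bound (b : ℝ) :
      Tendsto (fun c : ℕ => (((c : ℝ) + b) / c) ^ e / e !) atTop (𝓝 (1 / e !)) := by
    simpa using ((tendsto_natCast_add_div_self b).pow e).div_const (e ! : ℝ)
  refine tendsto_of_tendsto_of_tendsto_of_le_of_le' (bound (1 - a)) (bound (e - a)) ?_ ?_
  all_goals
    filter_upwards [eventually_ge_atTop (a + 1)] with c hc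
    have hc0 : (0 : ℝ) < (c : ℝ) ^ e := pow_pos (by exact_mod_cast (by omega : 0 < c)) e
    rw [div_pow, div_div, mul_comm, ← div_div, div_le_div_iff_of_pos_right hc0]
  · have h := Nat.pow_le_choose (α := ℝ) e (c - a + e)
    rwa [show c - a + e + 1 - e = c - a + 1 by omega, Nat.cast_add, Nat.cast_sub (by omega),
      Nat.cast_one, sub_add_eq_add_sub, ← add_sub_assoc'] at h
  · have h := Nat.choose_le_pow_div (α := ℝ) e (c - a + e)
    rwa [Nat.cast_add, Nat.cast_sub (by omega), sub_add_eq_add_sub, ← add_sub_assoc'] at h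

lemma choose_div_pow_le {e a c : ℕ} (hc : 0 < c) :
    ((c - a + e).choose e : ℝ) / (c : ℝ) ^ e ≤ ((e : ℝ) + 1) ^ e := by
  rw [div_le_iff₀ (by positivity), ← mul_pow]
  have h : (c - a + e).choose e ≤ ((e + 1) * c) ^ e :=
    (Nat.choose_le_pow _ _).trans <| Nat.pow_le_pow_left (by
      have := Nat.le_mul_of_pos_right e hc
      rw [add_mul, one_mul]
      omega) e
  exact_mod_cast h

lemma levelCount_div_eq_sum (e c : ℕ) :
    (levelCount e c : ℝ) / (2 ^ c * (c : ℝ) ^ e) =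
      ∑ i ∈ Finset.range c, 2⁻¹ ^ (i + 1) * (((c - (i + 1) + e).choose e : ℝ) / (c : ℝ) ^ e) := by
  rw [levelCount, ← Finset.sum_range_reflect, Nat.cast_sum, Finset.sum_div]
  refine Finset.sum_congr rfl fun i hi => ?_
  have hi : i < c := Finset.mem_range.mp hi
  have h2 : (2 : ℝ) ^ c = 2 ^ (c - (i + 1)) * 2 ^ (i + 1) := by
    rw [← pow_add]
    congr 1
    omega
  rw [show c - 1 - i = c - (i + 1) by omega, inv_pow, h2]
  push_cast
  field_simp

theorem tendsto_levelCount_div (e : ℕ) :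
    Tendsto (fun c : ℕ => (levelCount e c : ℝ) / (2 ^ c * (c : ℝ) ^ e)) atTop (𝓝 (1 / e !)) := by
  let g (c i : ℕ) : ℝ :=
    if i < c then 2⁻¹ ^ (i + 1) * (((c - (i + 1) + e).choose e : ℝ) / (c : ℝ) ^ e) else 0
  have hg (c : ℕ) : (levelCount e c : ℝ) / (2 ^ c * (c : ℝ) ^ e) = ∑' i, g c i := by
    rw [levelCount_div_eq_sum,
      tsum_eq_sum (s := Finset.range c) fun i hi => if_neg (by simpa using hi)]
    exact Finset.sum_congr rfl fun i hi => (if_pos (Finset.mem_range.mp hi)).symm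
  have hlimit : ∑' i : ℕ, (2⁻¹ : ℝ) ^ (i + 1) * (1 / e !) = 1 / e ! := by
    simp only [pow_succ, tsum_mul_right, tsum_geometric_inv_two]
    norm_num
  have hsummable : Summable fun i : ℕ => (2⁻¹ : ℝ) ^ (i + 1) * ((e : ℝ) + 1) ^ e :=
    ((summable_nat_add_iff 1).mpr
      (summable_geometric_of_lt_one (by norm_num) (by norm_num : (2⁻¹ : ℝ) < 1))).mul_right _
  have hpointwise (i : ℕ) : Tendsto (fun c => g c i) atTop (𝓝 (2⁻¹ ^ (i + 1) * (1 / e !))) := by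
    refine ((tendsto_choose_div_pow e (i + 1)).const_mul _).congr' ?_
    filter_upwards [eventually_gt_atTop i] with c hc
    simp only [g, if_pos hc]
  have hdominated : ∀ᶠ c in atTop, ∀ i, ‖g c i‖ ≤ 2⁻¹ ^ (i + 1) * ((e : ℝ) + 1) ^ e := by
    filter_upwards [eventually_gt_atTop 0] with c hc i
    simp only [g]
    split_ifs
    · rw [Real.norm_of_nonneg (by positivity)]
      exact mul_le_mul_of_nonneg_left (choose_div_pow_le hc) (by positivity)
    · simp only [norm_zero]; positivity
  have h := tendsto_tsum_of_dominated_convergence hsummable hpointwise hdominated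
  rw [hlimit] at h
  exact h.congr fun c => (hg c).symm

lemma tendsto_add_one_div {e : ℕ} {u : ℕ → ℝ} {α : ℝ}
    (hu : Tendsto (fun c : ℕ => u c / (2 ^ c * (c : ℝ) ^ e)) atTop (𝓝 α)) :
    Tendsto (fun c : ℕ => (u c + 1) / (2 ^ c * (c : ℝ) ^ e)) atTop (𝓝 α) := by
  have hden : Tendsto (fun c : ℕ => (2 : ℝ) ^ c * (c : ℝ) ^ e) atTop atTop := by
    refine tendsto_atTop_mono' _ ?_ (tendsto_pow_atTop_atTop_of_one_lt one_lt_two)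
    filter_upwards [eventually_gt_atTop 0] with c hc
    exact le_mul_of_one_le_right (by positivity) (one_le_pow₀ (by exact_mod_cast hc))
  have hsmall : Tendsto (fun c : ℕ => 1 / (2 ^ c * (c : ℝ) ^ e)) atTop (𝓝 0) :=
    tendsto_const_nhds.div_atTop hden
  simpa only [add_div, add_zero] using hu.add hsmall

lemma tendsto_succ_div {e : ℕ} {u : ℕ → ℝ} {α : ℝ}
    (hu : Tendsto (fun c : ℕ => u c / (2 ^ c * (c : ℝ) ^ e)) atTop (𝓝 α)) :
    Tendsto (fun c : ℕ => u (c + 1) / (2 ^ c * (c : ℝ) ^ e)) atTop (𝓝 (2 * α)) := by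
  have h := (((tendsto_add_atTop_iff_nat 1).mpr hu).const_mul 2).mul
    ((tendsto_natCast_add_div_self 1).pow e)
  rw [one_pow, mul_one] at h
  refine h.congr' ?_
  filter_upwards [eventually_gt_atTop 0] with c hc
  have hc' : (0 : ℝ) < c := by exact_mod_cast hc
  push_cast
  rw [div_pow, pow_succ]
  field_simp

lemma tendsto_log_div_natCast {e : ℕ} {w : ℕ → ℝ} {β : ℝ}
    (hw : Tendsto (fun c : ℕ => w c / (2 ^ c * (c : ℝ) ^ e)) atTop (𝓝 β)) (hβ : 0 < β) :
    Tendsto (fun c : ℕ => log (w c) / c) atTop (𝓝 (log 2)) := by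
  have hlog_ratio : Tendsto (fun c : ℕ => log (w c / (2 ^ c * (c : ℝ) ^ e)) / c) atTop (𝓝 0) :=
    (hw.log hβ.ne').div_atTop tendsto_natCast_atTop_atTop
  have hlog_c : Tendsto (fun c : ℕ => log c / c) atTop (𝓝 0) := by
    simpa [Function.comp_def] using
      (Real.tendsto_pow_log_div_mul_add_atTop 1 0 1 one_ne_zero).comp tendsto_natCast_atTop_atTop
  have h := (hlog_ratio.add_const (log 2)).add (hlog_c.const_mul (e : ℝ))
  rw [zero_add, mul_zero, add_zero] at h
  refine h.congr' ?_
  filter_upwards [hw.eventually (lt_mem_nhds hβ), eventually_gt_atTop 0] with c hratio hc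
  have hc' : (0 : ℝ) < c := by exact_mod_cast hc
  have hden : (0 : ℝ) < 2 ^ c * (c : ℝ) ^ e := by positivity
  have hwpos : 0 < w c := (div_pos_iff_of_pos_right hden).mp hratio
  rw [log_div hwpos.ne' hden.ne', log_mul (by positivity) (by positivity), log_pow, log_pow]
  field_simp
  ring

theorem tendsto_inv_two_pow_mul_div_log_pow {e : ℕ} {u w : ℕ → ℝ} {α β : ℝ}
    (hu : Tendsto (fun c : ℕ => u c / (2 ^ c * (c : ℝ) ^ e)) atTop (𝓝 α))
    (hw : Tendsto (fun c : ℕ => w c / (2 ^ c * (c : ℝ) ^ e)) atTop (𝓝 β)) (hβ : 0 < β) :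
    Tendsto (fun c : ℕ => 2⁻¹ ^ c * u c / log (w c) ^ e) atTop (𝓝 (α / log 2 ^ e)) := by
  refine (hu.div ((tendsto_log_div_natCast hw hβ).pow e)
    (pow_ne_zero e (log_pos one_lt_two).ne')).congr' ?_
  filter_upwards [eventually_gt_atTop 0] with c hc
  have hc' : (0 : ℝ) < c := by exact_mod_cast hc
  rw [Pi.div_apply, div_pow, inv_pow]
  field_simp

lemma inv_two_pow_mul_div_log_pow_mem_Icc {e c : ℕ} {n : ℕ+} (h : blockIndex e n = c)
    (hc : 0 < c) :
    2⁻¹ ^ blockIndex e n * (n : ℝ) / log n ^ e ∈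
      Set.Icc (2⁻¹ ^ c * ((levelCount e c : ℝ) + 1) / log (levelCount e (c + 1)) ^ e)
        (2⁻¹ ^ c * (levelCount e (c + 1) : ℝ) / log ((levelCount e c : ℝ) + 1) ^ e) := by
  obtain ⟨hlo, hhi⟩ := blockIndex_eq_iff.mp h
  have hlo' : (levelCount e c : ℝ) + 1 ≤ n := by exact_mod_cast hlo
  have hhi' : (n : ℝ) ≤ levelCount e (c + 1) := by exact_mod_cast hhi
  have hone : (1 : ℝ) ≤ levelCount e c := by
    exact_mod_cast (levelCount_strictMono e).monotone hc |>.trans' (levelCount_add_one_le e 0)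
  have hlog_pos : 0 < log ((levelCount e c : ℝ) + 1) := log_pos (by linarith)
  have hlog_le : log ((levelCount e c : ℝ) + 1) ≤ log n := log_le_log (by positivity) hlo'
  rw [h]
  refine ⟨?_, ?_⟩
  · exact div_le_div₀ (by positivity) (by gcongr) (pow_pos (hlog_pos.trans_le hlog_le) e)
      (pow_le_pow_left₀ (hlog_pos.trans_le hlog_le).le (log_le_log (by positivity) hhi') e)
  · exact div_le_div₀ (by positivity) (by gcongr) (pow_pos hlog_pos e)
      (pow_le_pow_left₀ hlog_pos.le hlog_le e)

theorem limsup_liminf_inv_two_pow_blockIndex (e : ℕ) :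
    limsup (fun n : ℕ+ => 2⁻¹ ^ blockIndex e n * (n : ℝ) / log n ^ e) atTop
        = 2 * (1 / log 2) ^ e / e ! ∧
      liminf (fun n : ℕ+ => 2⁻¹ ^ blockIndex e n * (n : ℝ) / log n ^ e) atTop
        = (1 / log 2) ^ e / e ! := by
  have hfact : (0 : ℝ) < 1 / e ! := by positivity
  have hM := tendsto_levelCount_div e
  have hM_add_one := tendsto_add_one_div hM
  have hM_succ := tendsto_succ_div hM
  have hL := tendsto_blockIndex e
  have hsucc : Tendsto (fun c => (levelCount e (c + 1)).toPNat (levelCount_succ_pos e c))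
      atTop atTop := PNat.tendsto_atTop_of_le_coe fun c =>
    ((levelCount_strictMono e).id_le c).trans (levelCount_strictMono e c.lt_succ_self).le
  have hadd_one : Tendsto (fun c => (levelCount e c).succPNat) atTop atTop :=
    PNat.tendsto_atTop_of_le_coe fun c => ((levelCount_strictMono e).id_le c).trans (Nat.le_succ _)
  constructor
  · rw [show 2 * (1 / log 2) ^ e / e ! = 2 * (1 / e ! : ℝ) / log 2 ^ e by ring]
    refine limsup_eq_of_eventuallyLE_of_tendsto_comp
      ((tendsto_inv_two_pow_mul_div_log_pow hM_succ hM_add_one hfact).comp hL) ?_ hsucc ?_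
    · filter_upwards [hL.eventually_gt_atTop 0] with n hn
      exact (inv_two_pow_mul_div_log_pow_mem_Icc rfl hn).2
    · refine (tendsto_inv_two_pow_mul_div_log_pow hM_succ hM_succ (by positivity)).congr fun c => ?_
      rw [Function.comp_apply, blockIndex_toPNat_levelCount_succ]
      rfl
  · rw [show (1 / log 2) ^ e / e ! = (1 / e ! : ℝ) / log 2 ^ e by ring]
    refine liminf_eq_of_eventuallyLE_of_tendsto_comp
      ((tendsto_inv_two_pow_mul_div_log_pow hM_add_one hM_succ (by positivity)).comp hL) ?_
      hadd_one ?_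
    · filter_upwards [hL.eventually_gt_atTop 0] with n hn
      exact (inv_two_pow_mul_div_log_pow_mem_Icc rfl hn).1
    · refine (tendsto_inv_two_pow_mul_div_log_pow hM_add_one hM_add_one hfact).congr fun c => ?_
      rw [Function.comp_apply, blockIndex_succPNat_levelCount, Nat.succPNat_coe, Nat.cast_succ]

lemma inv_log_two_pow_mem_Ioo {e : ℕ} (he : e ≠ 0) : (1 / log 2) ^ e ∈ Set.Ioo 1 (2 ^ e) := by
  have hlog_pos : 0 < log 2 := log_pos one_lt_two
  have hlt : 1 / log 2 < 2 := by
    rw [div_lt_iff₀ hlog_pos]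
    linarith [log_two_gt_d9]
  have hgt : 1 < 1 / log 2 := by
    rw [lt_div_iff₀ hlog_pos]
    linarith [log_two_lt_d9]
  exact ⟨one_lt_pow₀ hgt he, pow_lt_pow_left₀ hlt (by positivity) he⟩

end DyadicRearrangement

open DyadicRearrangement in
theorem stmt_12 (d : ℕ) (hd : 1 ≤ d) (σ τ : ℕ+ → ℝ)
    (hσ : ∀ n : ℕ+, σ n = (2 : ℝ) ^ (-(Nat.log 2 (n : ℕ) : ℤ)))
    (hτa : Antitone τ)
    -- τ is the nonincreasing rearrangement of the d-th tensor power of σ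
    (hre : ∀ t : ℝ, 0 < t →
      {n : ℕ+ | t ≤ τ n}.ncard = {x : Fin d → ℕ+ | t ≤ ∏ j, σ (x j)}.ncard) :
    Filter.limsup (fun n : ℕ+ => τ n * ((n : ℕ) : ℝ) / (Real.log ((n : ℕ) : ℝ)) ^ (d - 1))
        Filter.atTop
      = 2 * (1 / Real.log 2) ^ (d - 1) / (Nat.factorial (d - 1) : ℝ) ∧
    Filter.liminf (fun n : ℕ+ => τ n * ((n : ℕ) : ℝ) / (Real.log ((n : ℕ) : ℝ)) ^ (d - 1))
        Filter.atTop
      = (1 / Real.log 2) ^ (d - 1) / (Nat.factorial (d - 1) : ℝ) ∧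
    (2 ≤ d →
      (1 : ℝ) ^ d / (Nat.factorial (d - 1) : ℝ) <
        Filter.liminf (fun n : ℕ+ => τ n * ((n : ℕ) : ℝ) / (Real.log ((n : ℕ) : ℝ)) ^ (d - 1))
          Filter.atTop ∧
      Filter.liminf (fun n : ℕ+ => τ n * ((n : ℕ) : ℝ) / (Real.log ((n : ℕ) : ℝ)) ^ (d - 1))
          Filter.atTop <
        Filter.limsup (fun n : ℕ+ => τ n * ((n : ℕ) : ℝ) / (Real.log ((n : ℕ) : ℝ)) ^ (d - 1))
          Filter.atTop ∧
      Filter.limsup (fun n : ℕ+ => τ n * ((n : ℕ) : ℝ) / (Real.log ((n : ℕ) : ℝ)) ^ (d - 1))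
          Filter.atTop < (2 : ℝ) ^ d / (Nat.factorial (d - 1) : ℝ)) := by
  obtain ⟨e, rfl⟩ : ∃ e, d = e + 1 := ⟨d - 1, by omega⟩
  rw [Nat.add_sub_cancel]
  obtain rfl : τ = _ := eq_inv_two_pow_blockIndex hσ hτa hre
  obtain ⟨hlimsup, hliminf⟩ := limsup_liminf_inv_two_pow_blockIndex e
  refine ⟨hlimsup, hliminf, fun hd₂ => ?_⟩
  rw [hlimsup, hliminf]
  obtain ⟨hgt, hlt⟩ := inv_log_two_pow_mem_Ioo (e := e) (by omega)
  have hfact : (0 : ℝ) < e ! := by positivity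
  refine ⟨?_, ?_, ?_⟩
  · rw [one_pow]
    exact div_lt_div_of_pos_right hgt hfact
  · rw [mul_div_assoc]
    linarith [div_pos (zero_lt_one.trans hgt) hfact]
  · rw [pow_succ, mul_comm]
    exact div_lt_div_of_pos_right (by linarith) hfact
end

section
/- Let σ(n) = 1/n and μ̃(n) = 1 for n ≤ N, μ̃(n) = n^{-2} for n > N, and let τ̃ be the nonincreasing rearrangement of the tensor product sequence σ̃_2(n_1, n_2) = σ(n_1)·μ̃(n_2). Then liminf_{n→∞} τ̃(n)·n ≥ N. -/
open Filter Topology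

/-!
The superlevel set `{σ̃₂ ≥ 1/k}` contains the block `{n₁ ≤ k, n₂ ≤ N}` of `k N` points, and since
`∑_{b ≥ 2} ⌊k / b²⌋ ≤ k` it has at most `k (N + 1)` points. Hence `τ̃ n ≥ 1/k` as soon as
`n ≤ k N`, which gives `τ̃ n · n ≥ N n / (n + N) → N`. The upper count shows that `τ̃ n · n ≤ N + 2`
infinitely often; without it the real `liminf` could be the junk value of an unbounded sequence.
-/

lemma PNat.ncard_Icc_one (n : ℕ+) : (Set.Icc 1 n).ncard = n := by
  rw [Set.ncard_eq_toFinset_card', Set.toFinset_Icc, PNat.card_Icc]; simp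

lemma PNat.ncard_Ico_one (n : ℕ+) : (Set.Ico 1 n).ncard = n - 1 := by
  rw [Set.ncard_eq_toFinset_card', Set.toFinset_Ico, PNat.card_Ico]; simp

theorem Antitone.le_apply_iff_le_ncard {α : Type*} [LinearOrder α] {τ : ℕ+ → α}
    (hτ : Antitone τ) {t : α} (hfin : {m | t ≤ τ m}.Finite) (n : ℕ+) :
    t ≤ τ n ↔ (n : ℕ) ≤ {m | t ≤ τ m}.ncard := by
  constructor
  · intro h
    rw [← PNat.ncard_Icc_one n]
    exact Set.ncard_le_ncard (fun m hm => h.trans (hτ hm.2)) hfin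
  · intro h
    by_contra! hlt
    have hsub : {m | t ≤ τ m} ⊆ Set.Ico 1 n := fun m hm =>
      ⟨one_le, lt_of_not_ge fun hnm => (hlt.trans_le' (hτ hnm)).not_ge hm⟩
    have := (Set.ncard_le_ncard hsub (Set.finite_Ico _ _)).trans_eq (PNat.ncard_Ico_one n)
    have := n.pos
    omega

theorem Nat.sum_Icc_div_sq_le (m : ℕ) : ∑ b ∈ Finset.Icc 2 m, m / b ^ 2 ≤ m := by
  have hIcc : Finset.Icc 2 m = Finset.Ioo 1 (m + 1) := by ext; simp; omega
  have : (∑ b ∈ Finset.Icc 2 m, m / b ^ 2 : ℕ) ≤ (m : ℝ) := by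
    push_cast
    calc ∑ b ∈ Finset.Icc 2 m, ((m / b ^ 2 : ℕ) : ℝ)
        ≤ ∑ b ∈ Finset.Icc 2 m, (m : ℝ) * ((b : ℝ) ^ 2)⁻¹ := by
          gcongr with b
          rw [← div_eq_mul_inv]
          exact_mod_cast Nat.cast_div_le
      _ ≤ m * (2 / (1 + 1)) := by
          rw [← Finset.mul_sum, hIcc]
          gcongr
          exact_mod_cast sum_Ioo_inv_sq_le 1 (m + 1)
      _ = m := by norm_num
  exact_mod_cast this

noncomputable def sigmaTilde (N : ℕ) (p : ℕ+ × ℕ+) : ℝ :=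
  if (p.2 : ℕ) ≤ N then ((p.1 : ℕ) : ℝ)⁻¹ else ((p.1 : ℕ) : ℝ)⁻¹ * (((p.2 : ℕ) : ℝ) ^ 2)⁻¹

namespace sigmaTilde

variable {N m : ℕ}

theorem inv_le_iff (hm : 0 < m) (p : ℕ+ × ℕ+) :
    (m : ℝ)⁻¹ ≤ sigmaTilde N p ↔
      if (p.2 : ℕ) ≤ N then (p.1 : ℕ) ≤ m else (p.1 : ℕ) * (p.2 : ℕ) ^ 2 ≤ m := by
  unfold sigmaTilde
  split_ifs
  · rw [inv_le_inv₀ (by positivity) (by positivity)]; exact_mod_cast Iff.rfl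
  · rw [← mul_inv, inv_le_inv₀ (by positivity) (by positivity)]; exact_mod_cast Iff.rfl

theorem Icc_prod_subset_image_superlevel (hm : 0 < m) :
    ↑(Finset.Icc 1 m ×ˢ Finset.Icc 1 N) ⊆
      Prod.map PNat.val PNat.val '' {p | (m : ℝ)⁻¹ ≤ sigmaTilde N p} := by
  rintro ⟨a, b⟩ hab
  simp only [Finset.coe_product, Set.mem_prod, Finset.coe_Icc, Set.mem_Icc] at hab
  refine ⟨(⟨a, hab.1.1⟩, ⟨b, hab.2.1⟩), ?_, rfl⟩
  simp [inv_le_iff hm, hab.1.2, hab.2.2]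

theorem image_superlevel_subset (hN : 1 ≤ N) (hm : 0 < m) :
    Prod.map PNat.val PNat.val '' {p | (m : ℝ)⁻¹ ≤ sigmaTilde N p} ⊆
      ↑(Finset.Icc 1 m ×ˢ Finset.Icc 1 N ∪
        (Finset.Icc 2 m).biUnion fun b => Finset.Icc 1 (m / b ^ 2) ×ˢ {b}) := by
  rintro _ ⟨⟨a, b⟩, hab, rfl⟩
  have ha : 1 ≤ (a : ℕ) := a.pos
  have hb : 1 ≤ (b : ℕ) := b.pos
  replace hab := (inv_le_iff hm _).1 hab
  simp only [Prod.map, Finset.coe_union, Finset.coe_product, Finset.coe_Icc, Finset.coe_biUnion,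
    Finset.coe_singleton, Set.mem_union, Set.mem_prod, Set.mem_Icc, Set.mem_iUnion,
    Set.mem_singleton_iff, exists_prop] at hab ⊢
  split_ifs at hab with hbN
  · exact Or.inl ⟨⟨ha, hab⟩, hb, hbN⟩
  · refine Or.inr ⟨b, ⟨by omega, ?_⟩, ⟨ha, (Nat.le_div_iff_mul_le (by positivity)).2 hab⟩, rfl⟩
    nlinarith

theorem superlevel_finite (hN : 1 ≤ N) (hm : 0 < m) :
    {p | (m : ℝ)⁻¹ ≤ sigmaTilde N p}.Finite :=
  (Finset.finite_toSet _ |>.subset (image_superlevel_subset hN hm)).of_finite_image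
    (Function.Injective.prodMap PNat.coe_injective PNat.coe_injective).injOn

theorem mul_le_ncard_superlevel (hN : 1 ≤ N) (hm : 0 < m) :
    m * N ≤ {p | (m : ℝ)⁻¹ ≤ sigmaTilde N p}.ncard := by
  have hinj := Function.Injective.prodMap PNat.coe_injective PNat.coe_injective
  calc m * N = (↑(Finset.Icc 1 m ×ˢ Finset.Icc 1 N) : Set (ℕ × ℕ)).ncard := by
        rw [Set.ncard_coe_finset, Finset.card_product, Nat.card_Icc, Nat.card_Icc]; simp
    _ ≤ _ := Set.ncard_le_ncard (Icc_prod_subset_image_superlevel hm)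
        ((superlevel_finite hN hm).image _)
    _ = _ := Set.ncard_image_of_injective _ hinj

theorem ncard_superlevel_le (hN : 1 ≤ N) (hm : 0 < m) :
    {p | (m : ℝ)⁻¹ ≤ sigmaTilde N p}.ncard ≤ m * (N + 1) := by
  have hinj := Function.Injective.prodMap PNat.coe_injective PNat.coe_injective
  rw [← Set.ncard_image_of_injective _ hinj]
  refine (Set.ncard_le_ncard (image_superlevel_subset hN hm) (Finset.finite_toSet _)).trans ?_
  rw [Set.ncard_coe_finset]
  calc _ ≤ _ := Finset.card_union_le _ _
    _ ≤ m * N + ∑ b ∈ Finset.Icc 2 m, m / b ^ 2 := by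
        gcongr
        · simp
        · exact Finset.card_biUnion_le.trans_eq (by simp)
    _ ≤ m * N + m := by gcongr; exact Nat.sum_Icc_div_sq_le m
    _ = m * (N + 1) := by ring

end sigmaTilde

section Rearrangement

variable {N : ℕ} {τ : ℕ+ → ℝ} (hN : 1 ≤ N) (hτ : Antitone τ)
  (hre : ∀ t : ℝ, 0 < t → {n | t ≤ τ n}.ncard = {p | t ≤ sigmaTilde N p}.ncard)
include hN hτ hre

theorem inv_le_rearrangement_iff {m : ℕ} (hm : 0 < m) (n : ℕ+) :
    (m : ℝ)⁻¹ ≤ τ n ↔ (n : ℕ) ≤ {p | (m : ℝ)⁻¹ ≤ sigmaTilde N p}.ncard := by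
  have hpos : 0 < {n | (m : ℝ)⁻¹ ≤ τ n}.ncard := by
    rw [hre _ (by positivity)]
    exact (Nat.mul_pos hm hN).trans_le (sigmaTilde.mul_le_ncard_superlevel hN hm)
  rw [hτ.le_apply_iff_le_ncard (Set.finite_of_ncard_pos hpos), hre _ (by positivity)]

theorem inv_le_rearrangement {k : ℕ} (hk : 0 < k) {n : ℕ+} (hn : (n : ℕ) ≤ k * N) :
    (k : ℝ)⁻¹ ≤ τ n :=
  (inv_le_rearrangement_iff hN hτ hre hk n).2 (hn.trans (sigmaTilde.mul_le_ncard_superlevel hN hk))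

theorem rearrangement_lt_inv {m : ℕ} (hm : 0 < m) {n : ℕ+} (hn : m * (N + 1) < n) :
    τ n < (m : ℝ)⁻¹ :=
  lt_of_not_ge fun h => (hn.trans_le ((inv_le_rearrangement_iff hN hτ hre hm n).1 h)).not_ge
    (sigmaTilde.ncard_superlevel_le hN hm)

theorem mul_div_add_le_rearrangement_mul (n : ℕ+) :
    (N : ℝ) * n / (n + N) ≤ τ n * n := by
  set k := (n : ℕ) / N + 1
  have hnk : (n : ℕ) ≤ k * N := by
    rw [add_one_mul]; exact (Nat.lt_div_mul_add hN).le
  have hkn : (k * N : ℝ) ≤ n + N := by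
    norm_cast; rw [add_one_mul]; exact Nat.add_le_add_right (Nat.div_mul_le_self n N) N
  have hk : (0 : ℝ) < k := by positivity
  calc (N : ℝ) * n / (n + N) ≤ (k : ℝ)⁻¹ * n := by
        rw [div_le_iff₀ (by positivity), inv_mul_eq_div, div_mul_eq_mul_div, le_div_iff₀ hk]
        nlinarith [mul_le_mul_of_nonneg_left hkn (Nat.cast_nonneg (α := ℝ) n)]
    _ ≤ τ n * n := by gcongr; exact inv_le_rearrangement hN hτ hre (Nat.succ_pos _) hnk

theorem frequently_rearrangement_mul_le : ∃ᶠ n in atTop, τ n * n ≤ N + 2 := by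
  rw [frequently_atTop]
  intro a
  refine ⟨⟨a * (N + 1) + 1, Nat.succ_pos _⟩, ?_, ?_⟩
  · show (a : ℕ) ≤ a * (N + 1) + 1
    nlinarith
  · have ha : (1 : ℝ) ≤ a := by exact_mod_cast a.pos
    have hτn := rearrangement_lt_inv hN hτ hre a.pos (n := ⟨a * (N + 1) + 1, Nat.succ_pos _⟩)
      (Nat.lt_succ_self _)
    calc τ _ * ((a * (N + 1) + 1 : ℕ) : ℝ) ≤ (a : ℝ)⁻¹ * (a * (N + 1) + 1 : ℕ) := by gcongr
      _ ≤ N + 2 := by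
        rw [inv_mul_le_iff₀ (by positivity)]; push_cast; linarith

end Rearrangement

theorem stmt_13 (N : ℕ) (hN : 1 ≤ N) (f : ℕ+ × ℕ+ → ℝ)
    (hf : ∀ p : ℕ+ × ℕ+, f p =
      if (p.2 : ℕ) ≤ N then ((p.1 : ℕ) : ℝ)⁻¹
      else ((p.1 : ℕ) : ℝ)⁻¹ * (((p.2 : ℕ) : ℝ) ^ 2)⁻¹)
    (τ : ℕ+ → ℝ) (hτa : Antitone τ)
    -- τ is the nonincreasing rearrangement of f
    (hre : ∀ t : ℝ, 0 < t →
      {n : ℕ+ | t ≤ τ n}.ncard = {p : ℕ+ × ℕ+ | t ≤ f p}.ncard) :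
    (N : ℝ) ≤ Filter.liminf (fun n : ℕ+ => τ n * ((n : ℕ) : ℝ)) Filter.atTop := by
  obtain rfl : f = sigmaTilde N := funext hf
  have hlim : Tendsto (fun n : ℕ+ => (N : ℝ) * n / (n + N)) atTop (𝓝 N) := by
    simpa [mul_div_assoc] using
      (PNat.tendsto_comp_val_iff.2 (tendsto_natCast_div_add_atTop (N : ℝ))).const_mul (N : ℝ)
  calc (N : ℝ) = liminf (fun n : ℕ+ => (N : ℝ) * n / (n + N)) atTop := hlim.liminf_eq.symm
    _ ≤ _ := liminf_le_liminf (.of_forall (mul_div_add_le_rearrangement_mul hN hτa hre))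
        hlim.isBoundedUnder_ge
        (.of_frequently_le (frequently_rearrangement_mul_le hN hτa hre))
end

section
/- Let τ be the nonincreasing rearrangement of the two-dimensional sequence σ_2(n_1,n_2) = n_1^{-1}·n_2^{-2}. Then limsup_{n→∞} τ(n)·n ≤ 2. -/
/-!
For `t > 0` the pairs with `a⁻¹ b⁻² ≥ t` are those with `a b² ≤ K := ⌊1/t⌋`; counting them fibre
by fibre over `b` gives at most `∑_b K / b² ≤ 2K ≤ 2/t`. If `τ n > 0`, the first `n` values of the
nonincreasing `τ` are all `≥ τ n`, so `n ≤ #{σ₂ ≥ τ n} ≤ 2 / τ n`: thus `τ n · n ≤ 2` for every `n`.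
-/

open Filter Real Set

noncomputable def sigmaTwo (p : ℕ+ × ℕ+) : ℝ := ((p.1 : ℕ) : ℝ)⁻¹ * (((p.2 : ℕ) : ℝ) ^ 2)⁻¹

lemma sum_Icc_inv_sq_le_two (N : ℕ) : ∑ b ∈ Finset.Icc 1 N, ((b : ℝ) ^ 2)⁻¹ ≤ 2 := by
  have h := sum_Ioo_inv_sq_le (α := ℝ) 0 (N + 1)
  rw [show Finset.Ioo 0 (N + 1) = Finset.Icc 1 N by ext; simp; omega] at h
  simpa using h

/-- The pairs `(a, b)` of positive integers with `a * b ^ 2 ≤ K`. -/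
def mulSqLE (K : ℕ) : Finset (ℕ × ℕ) :=
  (Finset.Icc 1 K).biUnion fun b => Finset.Icc 1 (K / b ^ 2) ×ˢ {b}

lemma card_mulSqLE_le (K : ℕ) : ((mulSqLE K).card : ℝ) ≤ 2 * K := by
  calc ((mulSqLE K).card : ℝ)
      ≤ ∑ b ∈ Finset.Icc 1 K, ((K / b ^ 2 : ℕ) : ℝ) := by
        exact_mod_cast Finset.card_biUnion_le.trans_eq (by simp)
    _ ≤ ∑ b ∈ Finset.Icc 1 K, (K : ℝ) * ((b : ℝ) ^ 2)⁻¹ :=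
        Finset.sum_le_sum fun b _ => Nat.cast_div_le.trans_eq (by push_cast; ring)
    _ = K * ∑ b ∈ Finset.Icc 1 K, ((b : ℝ) ^ 2)⁻¹ := by rw [Finset.mul_sum]
    _ ≤ K * 2 := by gcongr; exact sum_Icc_inv_sq_le_two K
    _ = 2 * K := mul_comm _ _

lemma mapsTo_coe_mulSqLE (K : ℕ) :
    MapsTo (fun p : ℕ+ × ℕ+ => ((p.1 : ℕ), (p.2 : ℕ)))
      {p | (p.1 : ℕ) * (p.2 : ℕ) ^ 2 ≤ K} (mulSqLE K) := by
  rintro ⟨a, b⟩ (h : (a : ℕ) * (b : ℕ) ^ 2 ≤ K)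
  have ha := a.pos
  have hb := b.pos
  simp only [mulSqLE, Finset.coe_biUnion, Finset.coe_Icc, mem_iUnion, Finset.coe_product,
    Finset.coe_singleton, mem_prod, mem_singleton_iff]
  refine ⟨b, ⟨hb, ?_⟩, ⟨ha, (Nat.le_div_iff_mul_le (by positivity)).2 h⟩, rfl⟩
  nlinarith

lemma injective_coe_pnat_prod :
    Function.Injective (fun p : ℕ+ × ℕ+ => ((p.1 : ℕ), (p.2 : ℕ))) :=
  fun _ _ h => Prod.ext (PNat.coe_injective (congrArg Prod.fst h))
    (PNat.coe_injective (congrArg Prod.snd h))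

lemma setOf_le_sigmaTwo {t : ℝ} (ht : 0 < t) :
    {p | t ≤ sigmaTwo p} = {p : ℕ+ × ℕ+ | (p.1 : ℕ) * (p.2 : ℕ) ^ 2 ≤ ⌊t⁻¹⌋₊} := by
  ext ⟨a, b⟩
  have hab : (0 : ℝ) < (a : ℕ) * ((b : ℕ) : ℝ) ^ 2 := by positivity
  simp only [mem_ofPred_eq, sigmaTwo]
  rw [← mul_inv, le_inv_comm₀ ht hab, Nat.le_floor_iff (by positivity)]
  push_cast
  rfl

lemma finite_setOf_le_sigmaTwo {t : ℝ} (ht : 0 < t) : {p | t ≤ sigmaTwo p}.Finite := by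
  rw [setOf_le_sigmaTwo ht]
  exact Finite.of_injOn (mapsTo_coe_mulSqLE _) injective_coe_pnat_prod.injOn (Finset.finite_toSet _)

lemma ncard_setOf_le_sigmaTwo_le {t : ℝ} (ht : 0 < t) :
    ({p | t ≤ sigmaTwo p}.ncard : ℝ) ≤ 2 / t := by
  rw [setOf_le_sigmaTwo ht]
  calc _ ≤ ((mulSqLE ⌊t⁻¹⌋₊).card : ℝ) := by
        rw [← ncard_coe_finset]
        exact_mod_cast ncard_le_ncard_of_injOn _ (mapsTo_coe_mulSqLE _)
          injective_coe_pnat_prod.injOn (Finset.finite_toSet _)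
    _ ≤ 2 * ⌊t⁻¹⌋₊ := card_mulSqLE_le _
    _ ≤ 2 * t⁻¹ := by gcongr; exact Nat.floor_le (by positivity)
    _ = 2 / t := (div_eq_mul_inv _ _).symm

section Rearrangement

variable {α : Type*} {f : α → ℝ} {τ : ℕ+ → ℝ}
  (hre : ∀ t : ℝ, 0 < t → {n | t ≤ τ n}.ncard = {a | t ≤ f a}.ncard)
  (hfin : ∀ t : ℝ, 0 < t → {a | t ≤ f a}.Finite)
include hre hfin

lemma finite_setOf_le_of_ncard_eq (hpos : ∃ a, 0 < f a) {t : ℝ} (ht : 0 < t) :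
    {n | t ≤ τ n}.Finite := by
  obtain ⟨a, ha⟩ := hpos
  have hs : 0 < min t (f a) := lt_min ht ha
  -- `ncard` of an infinite set is `0`, but the level set of `f` at `min t (f a)` contains `a`.
  by_contra hinf
  have hinf' : {n | min t (f a) ≤ τ n}.Infinite :=
    Infinite.mono (fun n (hn : t ≤ τ n) => (min_le_left t (f a)).trans hn) hinf
  have hτs := hinf'.ncard
  have hfs : 0 < {b | min t (f a) ≤ f b}.ncard :=
    (ncard_pos (hfin _ hs)).2 ⟨a, min_le_right t (f a)⟩
  rw [hre _ hs] at hτs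
  omega

lemma mul_le_of_ncard_eq (hτ : Antitone τ) (hpos : ∃ a, 0 < f a) {C : ℝ}
    (hC : ∀ t : ℝ, 0 < t → ({a | t ≤ f a}.ncard : ℝ) ≤ C / t) (n : ℕ+) :
    τ n * ((n : ℕ) : ℝ) ≤ C := by
  rcases le_or_gt (τ n) 0 with hn | hn
  · have hC0 : 0 ≤ C := by simpa using (Nat.cast_nonneg _).trans (hC 1 one_pos)
    exact (mul_nonpos_of_nonpos_of_nonneg hn (Nat.cast_nonneg _)).trans hC0
  have hIcc : (n : ℕ) ≤ {m | τ n ≤ τ m}.ncard := by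
    calc (n : ℕ) = (Icc 1 n).ncard := by
          rw [← Finset.coe_Icc, ncard_coe_finset, PNat.card_Icc]; simp
      _ ≤ _ := ncard_le_ncard (fun m hm => hτ hm.2)
          (finite_setOf_le_of_ncard_eq hre hfin hpos hn)
  have hn_le : ((n : ℕ) : ℝ) ≤ C / τ n := by
    calc ((n : ℕ) : ℝ) ≤ {m | τ n ≤ τ m}.ncard := by exact_mod_cast hIcc
      _ = {a | τ n ≤ f a}.ncard := by rw [hre _ hn]
      _ ≤ C / τ n := hC _ hn
  rw [mul_comm]
  exact (le_div_iff₀ hn).1 hn_le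

end Rearrangement

lemma Real.limsup_le_of_forall_le {ι : Type*} {l : Filter ι} {u : ι → ℝ} {C : ℝ} (hC : 0 ≤ C)
    (h : ∀ i, u i ≤ C) : limsup u l ≤ C := by
  by_cases hcob : l.IsCoboundedUnder (· ≤ ·) u
  · exact limsup_le_of_le hcob (Eventually.of_forall h)
  · rw [Real.limsup_of_not_isCoboundedUnder hcob]
    exact hC

theorem stmt_14 (f : ℕ+ × ℕ+ → ℝ)
    (hf : ∀ p : ℕ+ × ℕ+, f p = ((p.1 : ℕ) : ℝ)⁻¹ * (((p.2 : ℕ) : ℝ) ^ 2)⁻¹)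
    (τ : ℕ+ → ℝ) (hτa : Antitone τ)
    -- τ is the nonincreasing rearrangement of f
    (hre : ∀ t : ℝ, 0 < t →
      {n : ℕ+ | t ≤ τ n}.ncard = {p : ℕ+ × ℕ+ | t ≤ f p}.ncard) :
    Filter.limsup (fun n : ℕ+ => τ n * ((n : ℕ) : ℝ)) Filter.atTop ≤ 2 := by
  obtain rfl : f = sigmaTwo := funext hf
  have hpos : ∃ p, 0 < sigmaTwo p := ⟨(1, 1), by simp [sigmaTwo]⟩
  exact Real.limsup_le_of_forall_le zero_le_two fun n =>
    mul_le_of_ncard_eq hre (fun _ => finite_setOf_le_sigmaTwo) hτa hpos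
      (fun _ => ncard_setOf_le_sigmaTwo_le) n
end

section
/- For each d ∈ ℕ let T_d be a compact norm-one operator between Hilbert spaces and T_d^d its d-th tensor power. Assume a_n(T_d) is nonincreasing in d for each n, and a_n(T_1) ≤ C n^{-s} for some C, s > 0. If a_2(T_d) decays polynomially, i.e., a_2(T_d) ≤ d^{-p} for some p > 0 and all large d, then the approximation problem {T_d^d} is strongly polynomially tractable: there exist constants K, r > 0 such that n(ε,d) := #{n ∈ ℕ : a_n(T_d^d) ≥ ε} ≤ K ε^{-1/r} for all ε > 0 and all sufficiently large d. -/
open Filter Real Set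

private lemma aux_sumsq : ∀ N : ℕ, ∑ n ∈ Finset.Icc 2 N, (((n:ℝ))^2)⁻¹ ≤ 1 := by
  have key : ∀ N : ℕ, ∑ n ∈ Finset.Icc 2 (N+1), (((n:ℝ))^2)⁻¹ ≤ 1 - ((N:ℝ)+1)⁻¹ := by
    intro N
    induction N with
    | zero =>
      rw [Finset.Icc_eq_empty_of_lt (by norm_num)]
      norm_num
    | succ M ih =>
      rw [Finset.sum_Icc_succ_top (by omega)]
      have h1 : (0:ℝ) < (M:ℝ) + 1 := by positivity
      have h2 : (0:ℝ) < (M:ℝ) + 2 := by positivity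
      have hc : ((M+1+1 : ℕ):ℝ) = (M:ℝ) + 2 := by push_cast; ring
      rw [hc]
      have h3 : ((M:ℝ)+1)⁻¹ - ((M:ℝ)+2)⁻¹ = (((M:ℝ)+1)*((M:ℝ)+2))⁻¹ := by
        field_simp
        ring
      have h4 : (((M:ℝ)+2)^2)⁻¹ ≤ (((M:ℝ)+1)*((M:ℝ)+2))⁻¹ :=
        inv_anti₀ (by positivity) (by nlinarith)
      have hstep : (((M:ℝ)+2)^2)⁻¹ ≤ ((M:ℝ)+1)⁻¹ - ((M:ℝ)+2)⁻¹ := by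
        rw [h3]; exact h4
      push_cast at ih ⊢
      rw [show (M:ℝ)+1+1 = (M:ℝ)+2 from by ring]
      linarith
  intro N
  match N with
  | 0 =>
    rw [Finset.Icc_eq_empty_of_lt (by norm_num)]
    norm_num
  | (M+1) =>
    refine le_trans (key M) ?_
    have h : (0:ℝ) ≤ ((M:ℝ)+1)⁻¹ := by positivity
    linarith

private lemma aux_prod_le {d : ℕ} (f : Fin d → ℝ) (h0 : ∀ i, 0 ≤ f i) (h1 : ∀ i, f i ≤ 1)
    (j : Fin d) : ∏ i, f i ≤ f j := by
  rw [← Finset.mul_prod_erase Finset.univ f (Finset.mem_univ j)]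
  calc f j * ∏ i ∈ Finset.univ.erase j, f i
      ≤ f j * 1 := by
        refine mul_le_mul_of_nonneg_left ?_ (h0 j)
        exact Finset.prod_le_one (fun i _ => h0 i) (fun i _ => h1 i)
    _ = f j := mul_one _

theorem stmt_16 (σ τ : ℕ → ℕ+ → ℝ)
    -- σ d are the singular values of the compact norm-one operator T_d
    (hσa : ∀ d, 1 ≤ d → Antitone (σ d))
    (hσ0 : ∀ d, 1 ≤ d → Filter.Tendsto (σ d) Filter.atTop (nhds 0))
    (hσnonneg : ∀ d, 1 ≤ d → ∀ n : ℕ+, 0 ≤ σ d n)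
    (hnorm : ∀ d, 1 ≤ d → σ d 1 = 1)
    -- a_n(T_d) is nonincreasing in d
    (hmono : ∀ n : ℕ+, ∀ d d' : ℕ, 1 ≤ d → d ≤ d' → σ d' n ≤ σ d n)
    -- a_n(T_1) ≤ C n^{-s}
    (C s : ℝ) (hC : 0 < C) (hs : 0 < s)
    (hdecay : ∀ n : ℕ+, σ 1 n ≤ C * ((n : ℕ) : ℝ) ^ (-s))
    -- τ d is the nonincreasing rearrangement of the d-th tensor power of σ d,
    -- i.e. the sequence of approximation numbers of T_d^d
    (hτa : ∀ d, 1 ≤ d → Antitone (τ d))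
    (hre : ∀ d, 1 ≤ d → ∀ t : ℝ, 0 < t →
      {n : ℕ+ | t ≤ τ d n}.ncard = {x : Fin d → ℕ+ | t ≤ ∏ j, σ d (x j)}.ncard)
    -- a_2(T_d) decays polynomially in d
    (hpoly : ∃ p : ℝ, 0 < p ∧ ∃ d₀ : ℕ, ∀ d : ℕ, d₀ ≤ d → σ d 2 ≤ (d : ℝ) ^ (-p)) :
    -- strong polynomial tractability for large d
    ∃ K r : ℝ, 0 < K ∧ 0 < r ∧ ∃ d₀ : ℕ, 1 ≤ d₀ ∧ ∀ d : ℕ, d₀ ≤ d → ∀ ε : ℝ, 0 < ε →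
      ({n : ℕ+ | ε ≤ τ d n}.ncard : ℝ) ≤ K * ε ^ (-1 / r) := by
  classical
  obtain ⟨p, hp, d₁, hd₁⟩ := hpoly
  have hsne : s ≠ 0 := hs.ne'
  have hpne : p ≠ 0 := hp.ne'
  set u : ℝ := 2 / s with hu
  set q : ℝ := u + 1 / p with hq
  have hu0 : 0 < u := by rw [hu]; positivity
  have hq0 : 0 < q := by rw [hq, hu]; positivity
  have hqne : q ≠ 0 := hq0.ne'
  refine ⟨Real.exp (C ^ u), 1 / q, Real.exp_pos _, one_div_pos.mpr hq0, max d₁ 1,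
    le_max_right _ _, ?_⟩
  intro d hd ε hε
  have hd1 : 1 ≤ d := le_trans (le_max_right _ _) hd
  have hdd1 : d₁ ≤ d := le_trans (le_max_left _ _) hd
  have hdR : (1:ℝ) ≤ (d:ℝ) := by exact_mod_cast hd1
  have hdpos : (0:ℝ) < (d:ℝ) := lt_of_lt_of_le zero_lt_one hdR
  have hrw : -1 / (1/q) = -q := by field_simp
  rw [hrw, hre d hd1 ε hε]
  -- basic facts about σ d
  have hnn : ∀ n : ℕ+, 0 ≤ σ d n := hσnonneg d hd1
  have hub : ∀ n : ℕ+, σ d n ≤ 1 := fun n =>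
    le_of_le_of_eq (hσa d hd1 n.one_le) (hnorm d hd1)
  -- choose a cutoff N with σ d n < ε beyond N
  have hev : ∀ᶠ n in Filter.atTop, σ d n < ε :=
    (hσ0 d hd1).eventually_lt_const hε
  obtain ⟨N, hN⟩ := Filter.eventually_atTop.mp hev
  set X := {x : Fin d → ℕ+ | ε ≤ ∏ j, σ d (x j)} with hX
  set B : Finset (Fin d → ℕ+) := Fintype.piFinset (fun _ => Finset.Icc 1 N) with hB
  have hfac : ∀ x ∈ X, ∀ j, ε ≤ σ d (x j) := by
    intro x hx j
    have hx' : ε ≤ ∏ j, σ d (x j) := hx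
    exact le_trans hx' (aux_prod_le _ (fun i => hnn _) (fun i => hub _) j)
  have hsub : X ⊆ ↑B := by
    intro x hx
    rw [Finset.mem_coe, hB, Fintype.mem_piFinset]
    intro j
    rw [Finset.mem_Icc]
    refine ⟨(x j).one_le, ?_⟩
    by_contra h
    push_neg at h
    exact absurd (hfac x hx j) (not_le.mpr (hN (x j) h.le))
  have hXfin : X.Finite := Set.Finite.subset B.finite_toSet hsub
  set F := hXfin.toFinset with hF
  have hFsub : F ⊆ B := by
    intro x hx
    exact hsub (hXfin.mem_toFinset.mp hx)
  have hcard : X.ncard = F.card := Set.ncard_eq_toFinset_card X hXfin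
  -- per-term bound for n ≥ 2
  have hterm : ∀ n ∈ (Finset.Icc (1:ℕ+) N).erase 1,
      (σ d n) ^ q ≤ C ^ u / (d:ℝ) * ((((n:ℕ)):ℝ)^2)⁻¹ := by
    intro n hn
    have hne : n ≠ 1 := (Finset.mem_erase.mp hn).1
    have h1n : 1 < n := lt_of_le_of_ne n.one_le (Ne.symm hne)
    have h1n' : (1:ℕ) < (n:ℕ) := by exact_mod_cast h1n
    have h2pn : (2:ℕ+) ≤ n := by
      have : (2:ℕ) ≤ (n:ℕ) := by omega
      exact_mod_cast this
    have hn0 : (0:ℝ) ≤ ((n:ℕ):ℝ) := Nat.cast_nonneg _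
    have hσd2 : σ d n ≤ (d:ℝ)^(-p) := le_trans (hσa d hd1 h2pn) (hd₁ d hdd1)
    have part1 : (σ d n)^(1/p) ≤ (d:ℝ)⁻¹ := by
      calc (σ d n)^(1/p) ≤ ((d:ℝ)^(-p))^(1/p) :=
            Real.rpow_le_rpow (hnn n) hσd2 (by positivity)
        _ = (d:ℝ)^(-p * (1/p)) := (Real.rpow_mul hdpos.le _ _).symm
        _ = (d:ℝ)⁻¹ := by
            have hppp : -p * (1/p) = -1 := by field_simp
            rw [hppp, Real.rpow_neg_one]
    have hσ1n : σ d n ≤ C * ((n:ℕ):ℝ)^(-s) :=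
      le_trans (hmono n 1 d le_rfl hd1) (hdecay n)
    have part2 : (σ d n)^u ≤ C^u * ((((n:ℕ)):ℝ)^2)⁻¹ := by
      calc (σ d n)^u ≤ (C * ((n:ℕ):ℝ)^(-s))^u :=
            Real.rpow_le_rpow (hnn n) hσ1n hu0.le
        _ = C^u * (((n:ℕ):ℝ)^(-s))^u := Real.mul_rpow hC.le (Real.rpow_nonneg hn0 _)
        _ = C^u * ((n:ℕ):ℝ)^(-s * u) := by rw [← Real.rpow_mul hn0]
        _ = C^u * ((((n:ℕ)):ℝ)^2)⁻¹ := by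
            have hsu : -s * u = -2 := by rw [hu]; field_simp
            rw [hsu, show ((-2:ℝ)) = -((2:ℕ):ℝ) by norm_num, Real.rpow_neg hn0,
              Real.rpow_natCast]
    by_cases hz : σ d n = 0
    · rw [hz, Real.zero_rpow hqne]
      positivity
    · have hposσ : 0 < σ d n := lt_of_le_of_ne (hnn n) (Ne.symm hz)
      calc (σ d n)^q = (σ d n)^u * (σ d n)^(1/p) := by rw [hq, Real.rpow_add hposσ]
        _ ≤ (C^u * ((((n:ℕ)):ℝ)^2)⁻¹) * (d:ℝ)⁻¹ :=
            mul_le_mul part2 part1 (Real.rpow_nonneg (hnn n) _) (by positivity)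
        _ = C^u / (d:ℝ) * ((((n:ℕ)):ℝ)^2)⁻¹ := by ring
  -- bound on the single-coordinate sum
  have hS : ∑ n ∈ Finset.Icc (1:ℕ+) N, (σ d n)^q ≤ 1 + C^u/(d:ℝ) := by
    have h1mem : (1:ℕ+) ∈ Finset.Icc (1:ℕ+) N := Finset.mem_Icc.mpr ⟨le_rfl, N.one_le⟩
    rw [← Finset.add_sum_erase _ _ h1mem, hnorm d hd1, Real.one_rpow]
    have hsum3 : ∑ n ∈ (Finset.Icc (1:ℕ+) N).erase 1, ((((n:ℕ)):ℝ)^2)⁻¹ ≤ 1 := by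
      have hinj : ∀ x ∈ (Finset.Icc (1:ℕ+) N).erase 1,
          ∀ y ∈ (Finset.Icc (1:ℕ+) N).erase 1, (x:ℕ) = (y:ℕ) → x = y :=
        fun x _ y _ h => PNat.coe_injective h
      have himg := Finset.sum_image (f := fun m : ℕ => (((m:ℝ))^2)⁻¹)
        (g := fun n : ℕ+ => (n:ℕ)) (s := (Finset.Icc (1:ℕ+) N).erase 1) hinj
      rw [← himg]
      refine le_trans (Finset.sum_le_sum_of_subset_of_nonneg ?_
        (fun i _ _ => by positivity)) (aux_sumsq (N:ℕ))
      intro m hm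
      rw [Finset.mem_image] at hm
      obtain ⟨n, hn, rfl⟩ := hm
      rw [Finset.mem_erase, Finset.mem_Icc] at hn
      obtain ⟨hne, -, hle⟩ := hn
      have h1n : 1 < n := lt_of_le_of_ne n.one_le (Ne.symm hne)
      have h1n' : (1:ℕ) < (n:ℕ) := by exact_mod_cast h1n
      rw [Finset.mem_Icc]
      exact ⟨by omega, by exact_mod_cast hle⟩
    have hsum2 : ∑ n ∈ (Finset.Icc (1:ℕ+) N).erase 1, (σ d n)^q ≤ C^u/(d:ℝ) := by
      calc ∑ n ∈ (Finset.Icc (1:ℕ+) N).erase 1, (σ d n)^q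
          ≤ ∑ n ∈ (Finset.Icc (1:ℕ+) N).erase 1, C^u/(d:ℝ) * ((((n:ℕ)):ℝ)^2)⁻¹ :=
            Finset.sum_le_sum hterm
        _ = C^u/(d:ℝ) * ∑ n ∈ (Finset.Icc (1:ℕ+) N).erase 1, ((((n:ℕ)):ℝ)^2)⁻¹ :=
            (Finset.mul_sum _ _ _).symm
        _ ≤ C^u/(d:ℝ) * 1 := mul_le_mul_of_nonneg_left hsum3 (by positivity)
        _ = C^u/(d:ℝ) := mul_one _
    linarith
  have hSnn : 0 ≤ ∑ n ∈ Finset.Icc (1:ℕ+) N, (σ d n)^q :=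
    Finset.sum_nonneg fun n _ => Real.rpow_nonneg (hnn n) q
  -- Markov / Chebyshev step
  have key1 : (F.card : ℝ) * ε ^ q ≤ ∑ x ∈ F, ∏ j, (σ d (x j)) ^ q := by
    have h := Finset.card_nsmul_le_sum F (fun x => ∏ j, (σ d (x j)) ^ q) (ε ^ q) ?_
    · simpa [nsmul_eq_mul] using h
    intro x hx
    have hx' : ε ≤ ∏ j, σ d (x j) := hXfin.mem_toFinset.mp hx
    calc ε ^ q ≤ (∏ j, σ d (x j)) ^ q := Real.rpow_le_rpow hε.le hx' hq0.le
      _ = ∏ j, (σ d (x j)) ^ q := (Real.finset_prod_rpow _ _ (fun i _ => hnn _) q).symm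
  have key2 : ∑ x ∈ F, ∏ j, (σ d (x j)) ^ q ≤ ∑ x ∈ B, ∏ j, (σ d (x j)) ^ q :=
    Finset.sum_le_sum_of_subset_of_nonneg hFsub fun x _ _ =>
      Finset.prod_nonneg fun j _ => Real.rpow_nonneg (hnn _) _
  have key3 : ∑ x ∈ B, ∏ j, (σ d (x j)) ^ q
      = (∑ n ∈ Finset.Icc (1:ℕ+) N, (σ d n) ^ q) ^ d := by
    have hps := Finset.prod_univ_sum (fun _ : Fin d => Finset.Icc (1:ℕ+) N)
      (fun _ n => (σ d n) ^ q)
    rw [hB, ← hps, Finset.prod_const, Finset.card_univ, Fintype.card_fin]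
  have hfinal : (F.card : ℝ) * ε ^ q ≤ Real.exp (C ^ u) := by
    refine le_trans key1 (le_trans key2 ?_)
    rw [key3]
    calc (∑ n ∈ Finset.Icc (1:ℕ+) N, (σ d n) ^ q) ^ d
        ≤ (1 + C^u/(d:ℝ))^d := pow_le_pow_left₀ hSnn hS d
      _ ≤ (Real.exp (C^u/(d:ℝ)))^d := by
          apply pow_le_pow_left₀ (by positivity)
          linarith [Real.add_one_le_exp (C^u/(d:ℝ))]
      _ = Real.exp (C^u) := by
          rw [← Real.exp_nat_mul]
          congr 1
          field_simp
  rw [hcard, Real.rpow_neg hε.le, ← div_eq_mul_inv,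
    le_div_iff₀ (Real.rpow_pos_of_pos hε q)]
  exact hfinal
end

section
/- For each d ∈ ℕ let T_d be a compact norm-one operator between Hilbert spaces with second singular value a_2(T_d) and let T_d^d be its d-th tensor power. If the problem {T_d^d} is polynomially tractable, i.e., n(ε,d) ≤ C ε^{-q} d^p for some nonnegative C, p, q and all ε > 0, d ∈ ℕ, then a_2(T_d) decays polynomially in d: there exist r ∈ ℕ and d_0 such that a_2(T_d) ≤ d^{-1/(2r+1)} for all d ≥ d_0. -/
open Filter Real Set

theorem stmt_17 (σ τ : ℕ → ℕ+ → ℝ)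
    -- σ d are the singular values of the compact norm-one operator T_d
    (hσa : ∀ d, 1 ≤ d → Antitone (σ d))
    (hσ0 : ∀ d, 1 ≤ d → Filter.Tendsto (σ d) Filter.atTop (nhds 0))
    (hσnonneg : ∀ d, 1 ≤ d → ∀ n : ℕ+, 0 ≤ σ d n)
    (hnorm : ∀ d, 1 ≤ d → σ d 1 = 1)
    -- τ d is the nonincreasing rearrangement of the d-th tensor power of σ d,
    -- i.e. the sequence of approximation numbers of T_d^d
    (hτa : ∀ d, 1 ≤ d → Antitone (τ d))
    (hre : ∀ d, 1 ≤ d → ∀ t : ℝ, 0 < t →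
      {n : ℕ+ | t ≤ τ d n}.ncard = {x : Fin d → ℕ+ | t ≤ ∏ j, σ d (x j)}.ncard)
    -- polynomial tractability of the problem {T_d^d}
    (C p q : ℝ) (hC : 0 ≤ C) (hp : 0 ≤ p) (hq : 0 ≤ q)
    (htract : ∀ ε : ℝ, 0 < ε → ∀ d : ℕ, 1 ≤ d →
      ({n : ℕ+ | ε ≤ τ d n}.ncard : ℝ) ≤ C * ε ^ (-q) * (d : ℝ) ^ p) :
    -- a_2(T_d) decays polynomially in d
    ∃ r : ℕ, ∃ d₀ : ℕ, 1 ≤ d₀ ∧ ∀ d : ℕ, d₀ ≤ d →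
      σ d 2 ≤ (d : ℝ) ^ (-(1 / (2 * (r : ℝ) + 1))) := by
  classical
  set r : ℕ := ⌈q⌉₊ with hrdef
  set α : ℝ := 1 / (2 * (r : ℝ) + 1) with hαdef
  set k : ℕ := ⌊2 * p⌋₊ + 1 with hkdef
  have hk1 : 1 ≤ k := Nat.le_add_left 1 _
  have hαpos : 0 < α := by
    apply div_pos one_pos
    positivity
  have hrq : q ≤ (r : ℝ) := Nat.le_ceil q
  have hαq : α * q ≤ 1 / 2 := by
    rw [hαdef, div_mul_eq_mul_div, one_mul, div_le_div_iff₀ (by positivity) two_pos]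
    nlinarith
  have hkp : 2 * p < (k : ℕ) := by
    have := Nat.lt_floor_add_one (2 * p)
    push_cast [hkdef]
    push_cast at this
    linarith
  set δ : ℝ := (k : ℝ) / 2 - p with hδdef
  have hδpos : 0 < δ := by
    rw [hδdef]; linarith
  set K : ℝ := C * 2 ^ k * (k.factorial : ℝ) with hKdef
  -- Key estimate: if σ d 2 is too big, then (d:ℝ)^δ ≤ K
  have key : ∀ d : ℕ, 2 * k ≤ d → (d : ℝ) ^ (-α) < σ d 2 → (d : ℝ) ^ δ ≤ K := by
    intro d hd2k hbad
    have hd1 : 1 ≤ d := by omega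
    have hdpos : (0 : ℝ) < d := by exact_mod_cast Nat.lt_of_lt_of_le Nat.zero_lt_one hd1
    have hd1R : (1 : ℝ) ≤ d := by exact_mod_cast hd1
    set s : ℝ := σ d 2 with hsdef
    have hspos : 0 < s := lt_trans (Real.rpow_pos_of_pos hdpos _) hbad
    have hsge : (d : ℝ) ^ (-α) ≤ s := hbad.le
    have hsle1 : ∀ n : ℕ+, σ d n ≤ 1 := by
      intro n
      have := hσa d hd1 (n.one_le)
      rwa [hnorm d hd1] at this
    set ε : ℝ := s ^ k with hεdef
    have hεpos : 0 < ε := pow_pos hspos k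
    set S : Set (Fin d → ℕ+) := {x : Fin d → ℕ+ | ε ≤ ∏ j, σ d (x j)} with hSdef
    -- every coordinate value of a point of S lies in a finite set
    have hcoord : ∀ x ∈ S, ∀ j : Fin d, ε ≤ σ d (x j) := by
      intro x hx j
      refine le_trans hx ?_
      rw [← Finset.mul_prod_erase Finset.univ _ (Finset.mem_univ j)]
      exact mul_le_of_le_one_right (hσnonneg d hd1 _)
        (Finset.prod_le_one (fun i _ => hσnonneg d hd1 _) (fun i _ => hsle1 _))
    obtain ⟨N0, hN0⟩ : ∃ N0 : ℕ+, ∀ n ≥ N0, σ d n < ε := by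
      have := (hσ0 d hd1).eventually_lt_const hεpos
      rwa [Filter.eventually_atTop] at this
    have hTfin : {n : ℕ+ | ε ≤ σ d n}.Finite := by
      have hsub : {n : ℕ+ | ε ≤ σ d n} ⊆ (fun n : ℕ+ => (n : ℕ)) ⁻¹' (Set.Iio (N0 : ℕ)) := by
        intro n hn
        simp only [Set.mem_preimage, Set.mem_Iio]
        by_contra hcon
        push_neg at hcon
        have hle : N0 ≤ n := by exact_mod_cast hcon
        exact absurd hn (not_le.2 (hN0 n hle))
      exact Set.Finite.subset (Set.Finite.preimage (PNat.coe_injective.injOn) (Set.finite_Iio _)) hsub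
    have hSfin : S.Finite := by
      refine Set.Finite.subset (Set.Finite.pi (fun _ : Fin d => hTfin)) ?_
      intro x hx
      simp only [Set.mem_pi, Set.mem_univ, forall_true_left]
      intro j
      exact hcoord x hx j
    -- injection from k-subsets of Fin d into S
    set F : Finset (Fin d) → (Fin d → ℕ+) := fun t j => if j ∈ t then 2 else 1 with hFdef
    have Finj : Function.Injective F := by
      intro a b hab
      ext j
      have hj := congrFun hab j
      by_cases ha : j ∈ a <;> by_cases hb : j ∈ b <;>
        simp only [hFdef, ha, hb, if_true, if_false] at hj ⊢ <;> tauto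
    set A : Set (Finset (Fin d)) := ↑(Finset.powersetCard k (Finset.univ : Finset (Fin d))) with hAdef
    have himage : F '' A ⊆ S := by
      rintro _ ⟨t, ht, rfl⟩
      have htc : t.card = k := by
        rw [hAdef] at ht
        simp only [Finset.coe_sort_coe, Finset.mem_coe, Finset.mem_powersetCard] at ht
        exact ht.2
      have hprod : ∏ j, σ d (F t j) = s ^ k := by
        have h1 : ∀ j : Fin d, σ d (F t j) = if j ∈ t then s else 1 := by
          intro j
          simp only [hFdef, apply_ite (σ d), hnorm d hd1, hsdef]
        rw [Finset.prod_congr rfl (fun j _ => h1 j), Finset.prod_ite_mem,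
          Finset.univ_inter, Finset.prod_const, htc]
      show ε ≤ ∏ j, σ d (F t j)
      rw [hprod, hεdef]
    have hcount : (d.choose k : ℝ) ≤ (S.ncard : ℝ) := by
      have h1 : A.ncard = d.choose k := by
        rw [hAdef, Set.ncard_coe_finset, Finset.card_powersetCard, Finset.card_univ,
          Fintype.card_fin]
      have h2 : A.ncard = (F '' A).ncard := (Set.ncard_image_of_injective A Finj).symm
      have h3 : (F '' A).ncard ≤ S.ncard := Set.ncard_le_ncard himage hSfin
      exact_mod_cast h1 ▸ h2 ▸ h3
    -- tractability bound
    have htr : (S.ncard : ℝ) ≤ C * ε ^ (-q) * (d : ℝ) ^ p := by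
      have := htract ε hεpos d hd1
      rwa [hre d hd1 ε hεpos] at this
    -- bound ε ^ (-q)
    have hεq : ε ^ (-q) ≤ (d : ℝ) ^ (α * ((k : ℝ) * q)) := by
      have e1 : ε ^ (-q) = s ^ (-((k : ℝ) * q)) := by
        rw [hεdef, ← Real.rpow_natCast s k, ← Real.rpow_mul hspos.le]
        ring_nf
      have e2 : s ^ (-((k : ℝ) * q)) ≤ ((d : ℝ) ^ (-α)) ^ (-((k : ℝ) * q)) :=
        Real.rpow_le_rpow_of_nonpos (Real.rpow_pos_of_pos hdpos _) hsge
          (neg_nonpos.mpr (by positivity))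
      have e3 : ((d : ℝ) ^ (-α)) ^ (-((k : ℝ) * q)) = (d : ℝ) ^ (α * ((k : ℝ) * q)) := by
        rw [← Real.rpow_mul hdpos.le]
        ring_nf
      rw [e1]
      exact e2.trans_eq e3
    -- lower bound on the binomial coefficient
    have hchoose : ((d : ℝ) / 2) ^ k / (k.factorial : ℝ) ≤ (d.choose k : ℝ) := by
      refine le_trans ?_ (Nat.pow_le_choose k d)
      apply div_le_div_of_nonneg_right ?_ (by positivity)
      apply pow_le_pow_left₀ (by positivity)
      have hkd : k ≤ d + 1 := by omega
      rw [Nat.cast_sub hkd]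
      have : (2 * k : ℝ) ≤ d := by exact_mod_cast hd2k
      push_cast at this ⊢
      linarith
    -- combine everything
    have hBpos : (0 : ℝ) < (d : ℝ) ^ (α * ((k : ℝ) * q) + p) := Real.rpow_pos_of_pos hdpos _
    set B : ℝ := (d : ℝ) ^ (α * ((k : ℝ) * q) + p) with hBdef
    have hmain : ((d : ℝ) / 2) ^ k / (k.factorial : ℝ) ≤ C * B := by
      calc ((d : ℝ) / 2) ^ k / (k.factorial : ℝ) ≤ (d.choose k : ℝ) := hchoose
        _ ≤ (S.ncard : ℝ) := hcount
        _ ≤ C * ε ^ (-q) * (d : ℝ) ^ p := htr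
        _ ≤ C * ((d : ℝ) ^ (α * ((k : ℝ) * q))) * (d : ℝ) ^ p := by
            apply mul_le_mul_of_nonneg_right _ (Real.rpow_nonneg hdpos.le p)
            exact mul_le_mul_of_nonneg_left hεq hC
        _ = C * B := by
            rw [hBdef, Real.rpow_add hdpos, mul_assoc]
    have hexp : δ + (α * ((k : ℝ) * q) + p) ≤ (k : ℝ) := by
      have hk0 : (0 : ℝ) ≤ k := Nat.cast_nonneg k
      have : α * ((k : ℝ) * q) ≤ (k : ℝ) / 2 := by nlinarith
      rw [hδdef]; linarith
    have hfac : (0 : ℝ) < (k.factorial : ℝ) := by exact_mod_cast k.factorial_pos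
    have hchain : (d : ℝ) ^ δ * B ≤ K * B := by
      calc (d : ℝ) ^ δ * B = (d : ℝ) ^ (δ + (α * ((k : ℝ) * q) + p)) := by
            rw [Real.rpow_add hdpos]
        _ ≤ (d : ℝ) ^ ((k : ℝ)) := Real.rpow_le_rpow_of_exponent_le hd1R hexp
        _ = (d : ℝ) ^ k := Real.rpow_natCast _ k
        _ = 2 ^ k * ((d : ℝ) / 2) ^ k := by
            rw [← mul_pow]
            congr 1
            field_simp
        _ ≤ 2 ^ k * ((k.factorial : ℝ) * (C * B)) := by
            apply mul_le_mul_of_nonneg_left _ (by positivity)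
            have := (div_le_iff₀ hfac).mp hmain
            linarith
        _ = K * B := by rw [hKdef]; ring
    exact le_of_mul_le_mul_right hchain hBpos
  -- (d:ℝ)^δ tends to infinity, so eventually exceeds K
  obtain ⟨N, hN⟩ : ∃ N : ℕ, ∀ d ≥ N, K < (d : ℝ) ^ δ := by
    have h1 : Filter.Tendsto (fun d : ℕ => (d : ℝ) ^ δ) Filter.atTop Filter.atTop :=
      (tendsto_rpow_atTop hδpos).comp tendsto_natCast_atTop_atTop
    have := h1.eventually_gt_atTop K
    rwa [Filter.eventually_atTop] at this
  refine ⟨r, max (max (2 * k) N) 1, le_max_right _ _, ?_⟩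
  intro d hd
  by_contra hcon
  push_neg at hcon
  have hd2k : 2 * k ≤ d := le_trans (le_trans (le_max_left _ _) (le_max_left _ _)) hd
  have hdN : N ≤ d := le_trans (le_trans (le_max_right _ _) (le_max_left _ _)) hd
  have := key d hd2k hcon
  exact absurd this (not_le.2 (hN d hdN))
end
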